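/- arXiv:math/0210453 — 5 statements merged into one kernel-verified Lean document; each statement's English description precedes it below -/
import Mathlib

section
/- Let f : ℝ → ℝ be three times continuously differentiable and satisfy: (A1) x·f(x) < 0 for all x ≠ 0 and f'(0) < 0; (A2) f is bounded below and has at most one critical point x* ∈ ℝ, which is a local extremum; (A3) (Sf)(x) < 0 for all x ≠ x*. Assume in addition f''(0) > 0. Set a = f'(0) < 0, b = −f''(0)/(2f'(0)) > 0, and r(x) = ax/(1+bx). Then r(x) > f(x) for all x ∈ (−1/b, 0), and r(x) < f(x) for all x > 0. -/
open Set Filter Topology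

/-- The Schwarz derivative `Sf(x) = f'''(x)/f'(x) - (3/2)(f''(x)/f'(x))²`. -/
noncomputable def Schwarzian (f : ℝ → ℝ) (x : ℝ) : ℝ :=
  iteratedDeriv 3 f x / deriv f x - (3 / 2) * (iteratedDeriv 2 f x / deriv f x) ^ 2

section helpers
variable {f : ℝ → ℝ}

lemma smooth2 (hf : ContDiff ℝ 3 f) : Differentiable ℝ (deriv f) := by
  have h0 : ContDiff ℝ (2+1) f := by exact_mod_cast hf
  exact ((contDiff_succ_iff_deriv.mp h0).2.2).differentiable (by norm_num)

lemma smooth3 (hf : ContDiff ℝ 3 f) : Differentiable ℝ (deriv (deriv f)) := by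
  have h0 : ContDiff ℝ (2+1) f := by exact_mod_cast hf
  have h1 : ContDiff ℝ (1+1) (deriv f) := by exact_mod_cast (contDiff_succ_iff_deriv.mp h0).2.2
  exact ((contDiff_succ_iff_deriv.mp h1).2.2).differentiable (by norm_num)

lemma iter2 : iteratedDeriv 2 f = deriv (deriv f) := by
  simp [iteratedDeriv_succ, iteratedDeriv_zero]

lemma iter3 : iteratedDeriv 3 f = deriv (deriv (deriv f)) := by
  simp [iteratedDeriv_succ, iteratedDeriv_zero]

/-- derivative of w = 1/sqrt(-f') - (1+b z)/c -/
lemma hasDerivAt_w (hf : ContDiff ℝ 3 f) {y : ℝ} (hy : deriv f y < 0) (b c : ℝ) (hc : c ≠ 0) :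
    HasDerivAt (fun z => (Real.sqrt (-(deriv f z)))⁻¹ - (1+b*z)/c)
      (deriv (deriv f) y / (2*(-(deriv f y))*Real.sqrt (-(deriv f y))) - b/c) y := by
  have hp : 0 < -(deriv f y) := by linarith
  have hs_pos : 0 < Real.sqrt (-(deriv f y)) := Real.sqrt_pos.mpr hp
  have h1 : HasDerivAt (fun z => -(deriv f z)) (-(deriv (deriv f) y)) y :=
    ((smooth2 hf y).hasDerivAt).neg
  have hsq : HasDerivAt (fun z => Real.sqrt (-(deriv f z)))
      (1/(2*Real.sqrt (-(deriv f y))) * -(deriv (deriv f) y)) y :=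
    (Real.hasDerivAt_sqrt hp.ne').comp y h1
  have hinv := hsq.inv hs_pos.ne'
  have hlin : HasDerivAt (fun z => (1+b*z)/c) (b/c) y := by
    simpa using (((hasDerivAt_id y).const_mul b).const_add 1).div_const c
  refine (hinv.sub hlin).congr_deriv ?_
  set s := Real.sqrt (-(deriv f y)) with hsdef
  have hs : s^2 = -(deriv f y) := Real.sq_sqrt hp.le
  rw [← hs]
  field_simp

/-- derivative of w' = f''/(2(-f')√(-f')) is positive where Sf < 0 -/
lemma hasDerivAt_w' (hf : ContDiff ℝ 3 f) {y : ℝ} (hy : deriv f y < 0)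
    (hS : Schwarzian f y < 0) :
    ∃ E : ℝ, 0 < E ∧ HasDerivAt
      (fun z => deriv (deriv f) z / (2*(-(deriv f z))*Real.sqrt (-(deriv f z)))) E y := by
  have hp : 0 < -(deriv f y) := by linarith
  have hs_pos : 0 < Real.sqrt (-(deriv f y)) := Real.sqrt_pos.mpr hp
  have h1 : HasDerivAt (fun z => -(deriv f z)) (-(deriv (deriv f) y)) y :=
    ((smooth2 hf y).hasDerivAt).neg
  have hsq : HasDerivAt (fun z => Real.sqrt (-(deriv f z)))
      (1/(2*Real.sqrt (-(deriv f y))) * -(deriv (deriv f) y)) y :=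
    (Real.hasDerivAt_sqrt hp.ne').comp y h1
  have hnum : HasDerivAt (fun z => deriv (deriv f) z) (deriv (deriv (deriv f)) y) y :=
    (smooth3 hf y).hasDerivAt
  have hden := (h1.const_mul 2).mul hsq
  have hden_ne : 2*(-(deriv f y))*Real.sqrt (-(deriv f y)) ≠ 0 := by positivity
  have hdiv := hnum.div hden hden_ne
  refine ⟨_, ?_, hdiv⟩
  have hne : deriv f y ≠ 0 := hy.ne
  have hS' : iteratedDeriv 3 f y * deriv f y < 3/2 * (iteratedDeriv 2 f y)^2 := by
    have h : iteratedDeriv 3 f y / deriv f y < 3/2 * (iteratedDeriv 2 f y / deriv f y)^2 := by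
      have := hS; rw [Schwarzian] at this; linarith
    have hsq2 : (0:ℝ) < (deriv f y)^2 := by positivity
    have h3 := mul_lt_mul_of_pos_right h hsq2
    have e1 : (iteratedDeriv 3 f y / deriv f y) * (deriv f y)^2 = iteratedDeriv 3 f y * deriv f y := by
      field_simp
    have e2 : (3/2 * (iteratedDeriv 2 f y / deriv f y)^2) * (deriv f y)^2
        = 3/2 * (iteratedDeriv 2 f y)^2 := by field_simp
    rw [e1, e2] at h3
    exact h3
  rw [iter2, iter3] at hS'
  set s := Real.sqrt (-(deriv f y)) with hsdef
  have hs : s^2 = -(deriv f y) := Real.sq_sqrt hp.le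
  apply div_pos
  · have e : deriv (deriv (deriv f)) y * (2 * -deriv f y * s) -
        deriv (deriv f) y * (2 * -deriv (deriv f) y * s + 2 * -deriv f y * (1 / (2 * s) * -deriv (deriv f) y))
        = s * (3 * (deriv (deriv f) y)^2 + 2 * s^2 * deriv (deriv (deriv f)) y) := by
      rw [← hs]; field_simp; ring
    show 0 < deriv (deriv (deriv f)) y * (2 * -deriv f y * s) - _
    rw [e]
    apply mul_pos hs_pos
    nlinarith [hS', hs]
  · positivity

lemma key (hf : ContDiff ℝ 3 f)
    (hA3 : ∀ x : ℝ, deriv f x ≠ 0 → Schwarzian f x < 0)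
    (a b : ℝ) (ha : a = deriv f 0) (hb : b = -(iteratedDeriv 2 f 0) / (2 * deriv f 0))
    (x : ℝ) (hx : x ≠ 0) (hseg : ∀ y ∈ uIcc 0 x, deriv f y < 0) (hbx : 0 < 1 + b * x) :
    a / (1 + b*x)^2 < deriv f x := by
  have ha0 : deriv f 0 < 0 := hseg 0 left_mem_uIcc
  have haneg : a < 0 := ha ▸ ha0
  set c := Real.sqrt (-a) with hcdef
  have hc_pos : 0 < c := Real.sqrt_pos.mpr (by linarith)
  have hc2 : c^2 = -a := Real.sq_sqrt (by linarith)
  set w : ℝ → ℝ := fun z => (Real.sqrt (-(deriv f z)))⁻¹ - (1+b*z)/c with hwdef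
  set w' : ℝ → ℝ :=
    fun z => deriv (deriv f) z / (2*(-(deriv f z))*Real.sqrt (-(deriv f z))) - b/c with hw'def
  have hww : ∀ y ∈ uIcc 0 x, HasDerivAt w (w' y) y :=
    fun y hy => hasDerivAt_w hf (hseg y hy) b c hc_pos.ne'
  have hw0 : w 0 = 0 := by
    simp only [hwdef, ← ha]
    rw [← hcdef]
    field_simp
    ring
  have hw'0 : w' 0 = 0 := by
    simp only [hw'def]
    rw [hb, iter2, ← ha, ← hcdef, sub_eq_zero]
    have hane : a ≠ 0 := haneg.ne
    field_simp
  have hmono : StrictMonoOn w' (uIcc 0 x) := by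
    apply strictMonoOn_of_deriv_pos (convex_uIcc 0 x)
    · intro y hy
      obtain ⟨E, hE, hD⟩ := hasDerivAt_w' hf (hseg y hy) (hA3 y (hseg y hy).ne)
      exact ((hD.sub_const (b/c)).continuousAt).continuousWithinAt
    · intro y hy
      have hy' := interior_subset hy
      obtain ⟨E, hE, hD⟩ := hasDerivAt_w' hf (hseg y hy') (hA3 y (hseg y hy').ne)
      rw [(hD.sub_const (b/c)).deriv]
      exact hE
  have hcont : ContinuousOn w (uIcc 0 x) :=
    fun y hy => ((hww y hy).continuousAt).continuousWithinAt
  have hwx : 0 < w x := by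
    rcases hx.lt_or_gt with hneg | hpos
    · have huicc : uIcc 0 x = Icc x 0 := by rw [uIcc_comm, uIcc_of_le hneg.le]
      rw [huicc] at hmono hcont hww
      have hanti : StrictAntiOn w (Icc x 0) := by
        apply strictAntiOn_of_deriv_neg (convex_Icc x 0) hcont
        intro y hy
        rw [interior_Icc] at hy
        rw [(hww y (Ioo_subset_Icc_self hy)).deriv]
        have : w' y < w' 0 := hmono (Ioo_subset_Icc_self hy) (right_mem_Icc.mpr hneg.le) hy.2
        linarith [hw'0 ▸ this]
      have := hanti (left_mem_Icc.mpr hneg.le) (right_mem_Icc.mpr hneg.le) hneg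
      linarith [hw0 ▸ this]
    · have huicc : uIcc 0 x = Icc 0 x := uIcc_of_le hpos.le
      rw [huicc] at hmono hcont hww
      have hmonow : StrictMonoOn w (Icc 0 x) := by
        apply strictMonoOn_of_deriv_pos (convex_Icc 0 x) hcont
        intro y hy
        rw [interior_Icc] at hy
        rw [(hww y (Ioo_subset_Icc_self hy)).deriv]
        have : w' 0 < w' y := hmono (left_mem_Icc.mpr hpos.le) (Ioo_subset_Icc_self hy) hy.1
        linarith [hw'0 ▸ this]
      have := hmonow (left_mem_Icc.mpr hpos.le) (right_mem_Icc.mpr hpos.le) hpos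
      linarith [hw0 ▸ this]
  have hfx : deriv f x < 0 := hseg x right_mem_uIcc
  set s := Real.sqrt (-(deriv f x)) with hsdef
  have hs_pos : 0 < s := Real.sqrt_pos.mpr (by linarith)
  have hs2 : s^2 = -(deriv f x) := Real.sq_sqrt (by linarith)
  have h1 : (1+b*x)/c < s⁻¹ := by
    have : w x = s⁻¹ - (1+b*x)/c := rfl
    linarith [this ▸ hwx]
  have h2 : s * (1+b*x) < c := by
    rw [inv_eq_one_div, div_lt_div_iff₀ hc_pos hs_pos] at h1
    nlinarith [h1]
  have h3 : (s*(1+b*x))^2 < c^2 := by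
    have hnn : 0 ≤ s * (1+b*x) := by positivity
    nlinarith [h2, hnn]
  rw [div_lt_iff₀ (by positivity : (0:ℝ) < (1+b*x)^2)]
  nlinarith [h3, hs2, hc2]

lemma fzero (hf : Continuous f) (hA1 : ∀ x : ℝ, x ≠ 0 → x * f x < 0) : f 0 = 0 := by
  have h1 : f 0 ≤ 0 := by
    have ht : Tendsto f (𝓝[>] (0:ℝ)) (𝓝 (f 0)) := (hf.tendsto 0).mono_left nhdsWithin_le_nhds
    refine le_of_tendsto ht ?_
    filter_upwards [self_mem_nhdsWithin] with x hx
    have hx0 : (0:ℝ) < x := hx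
    nlinarith [hA1 x hx0.ne']
  have h2 : 0 ≤ f 0 := by
    have ht : Tendsto f (𝓝[<] (0:ℝ)) (𝓝 (f 0)) := (hf.tendsto 0).mono_left nhdsWithin_le_nhds
    refine ge_of_tendsto ht ?_
    filter_upwards [self_mem_nhdsWithin] with x hx
    have hx0 : x < 0 := hx
    nlinarith [hA1 x hx0.ne]
  linarith

lemma seg_s1 (hcont : Continuous (deriv f)) (hdiff : Differentiable ℝ f)
    (hA2uniq : ∀ x y : ℝ, deriv f x = 0 → deriv f y = 0 → x = y)
    (hA2extr : ∀ x : ℝ, deriv f x = 0 → IsLocalExtr f x)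
    {c d : ℝ} (hcd : c < d) (hc : deriv f c < 0) (hd : deriv f d < 0) :
    ∀ y ∈ Icc c d, deriv f y < 0 := by
  have hnp : ∀ p ∈ Icc c d, deriv f p ≤ 0 := by
    by_contra hcon
    push_neg at hcon
    obtain ⟨p, hp, hppos⟩ := hcon
    have hcp : c < p := lt_of_le_of_ne hp.1 (by rintro rfl; linarith)
    have hpd : p < d := lt_of_le_of_ne hp.2 (by rintro rfl; linarith)
    have h1 : (0:ℝ) ∈ Ioo (deriv f c) (deriv f p) := ⟨hc, hppos⟩
    obtain ⟨z₁, hz₁, hz₁0⟩ := intermediate_value_Ioo hcp.le hcont.continuousOn h1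
    have h2 : (0:ℝ) ∈ Ioo (deriv f d) (deriv f p) := ⟨hd, hppos⟩
    obtain ⟨z₂, hz₂, hz₂0⟩ := intermediate_value_Ioo' hpd.le hcont.continuousOn h2
    have heq := hA2uniq z₁ z₂ hz₁0 hz₂0
    rw [heq] at hz₁
    exact absurd (hz₁.2.trans hz₂.1) (lt_irrefl z₂)
  intro y hy
  rcases lt_or_eq_of_le (hnp y hy) with h | h
  · exact h
  have hz0 : deriv f y = 0 := h
  exfalso
  have hcy : c < y := lt_of_le_of_ne hy.1 (by rintro rfl; linarith)
  have hyd : y < d := lt_of_le_of_ne hy.2 (by rintro rfl; linarith)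
  have hne : ∀ p ∈ Icc c d, p ≠ y → deriv f p < 0 := by
    intro p hp hpy
    rcases lt_or_eq_of_le (hnp p hp) with h' | h'
    · exact h'
    · exact absurd (hA2uniq p y h' hz0) hpy
  have hanti₂ : StrictAntiOn f (Icc y d) := by
    apply strictAntiOn_of_deriv_neg (convex_Icc y d) hdiff.continuous.continuousOn
    intro p hp
    rw [interior_Icc] at hp
    exact hne p ⟨(hcy.trans hp.1).le, hp.2.le⟩ (ne_of_gt hp.1)
  have hanti₁ : StrictAntiOn f (Icc c y) := by
    apply strictAntiOn_of_deriv_neg (convex_Icc c y) hdiff.continuous.continuousOn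
    intro p hp
    rw [interior_Icc] at hp
    exact hne p ⟨hp.1.le, (hp.2.trans hyd).le⟩ (ne_of_lt hp.2)
  rcases hA2extr y hz0 with hmin | hmax
  · have h1 : ∀ᶠ z in 𝓝[>] y, f y ≤ f z := hmin.filter_mono nhdsWithin_le_nhds
    have h2 : ∀ᶠ z in 𝓝[>] y, z ∈ Ioc y d := Ioc_mem_nhdsGT_of_mem ⟨le_refl y, hyd⟩
    obtain ⟨z, hz1, hz2⟩ := (h1.and h2).exists
    have : f z < f y := hanti₂ ⟨le_refl y, hyd.le⟩ ⟨hz2.1.le, hz2.2⟩ hz2.1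
    linarith
  · have h1 : ∀ᶠ z in 𝓝[<] y, f z ≤ f y := hmax.filter_mono nhdsWithin_le_nhds
    have h2 : ∀ᶠ z in 𝓝[<] y, z ∈ Ico c y := Ico_mem_nhdsLT_of_mem ⟨hcy, le_refl y⟩
    obtain ⟨z, hz1, hz2⟩ := (h1.and h2).exists
    have : f y < f z := hanti₁ ⟨hz2.1, hz2.2.le⟩ ⟨hcy.le, le_refl y⟩ hz2.2
    linarith

end helpers

/-- Lemma 2.1 of [lprtt]: under (A1)-(A3) and f''(0) > 0, with a = f'(0),
b = -f''(0)/(2f'(0)) and r(x) = ax/(1+bx), one has r > f on (-1/b, 0) and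
r < f on (0, ∞). -/
theorem rational_comparison_lemma (f : ℝ → ℝ)
    (hf : ContDiff ℝ 3 f)
    -- (A1)
    (hA1 : ∀ x : ℝ, x ≠ 0 → x * f x < 0) (hA1' : deriv f 0 < 0)
    -- (A2)
    (hA2bdd : ∃ B : ℝ, ∀ x : ℝ, B ≤ f x)
    (hA2uniq : ∀ x y : ℝ, deriv f x = 0 → deriv f y = 0 → x = y)
    (hA2extr : ∀ x : ℝ, deriv f x = 0 → IsLocalExtr f x)
    -- (A3)
    (hA3 : ∀ x : ℝ, deriv f x ≠ 0 → Schwarzian f x < 0)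
    (hf2 : 0 < iteratedDeriv 2 f 0)
    (a b : ℝ) (ha : a = deriv f 0)
    (hb : b = -(iteratedDeriv 2 f 0) / (2 * deriv f 0))
    (r : ℝ → ℝ) (hr : ∀ x : ℝ, r x = a * x / (1 + b * x)) :
    (∀ x ∈ Ioo (-(1 / b)) (0 : ℝ), f x < r x) ∧ (∀ x : ℝ, 0 < x → r x < f x) := by
  have hdiff : Differentiable ℝ f := hf.differentiable (by norm_num)
  have hd2 := smooth2 hf
  have haneg : a < 0 := ha ▸ hA1'
  have hbpos : 0 < b := by
    rw [hb]
    apply div_pos_of_neg_of_neg <;> linarith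
  have hf0 : f 0 = 0 := fzero hdiff.continuous hA1
  have hrfun : r = fun x => a * x / (1 + b * x) := funext hr
  -- derivative comparison
  have hcomp : ∀ x : ℝ, x ≠ 0 → 0 < 1 + b * x → a / (1 + b*x)^2 < deriv f x := by
    intro x hx hbx
    by_cases hfx : deriv f x < 0
    · apply key hf hA3 a b ha hb x hx ?_ hbx
      rcases hx.lt_or_gt with hneg | hpos
      · have := seg_s1 hd2.continuous hdiff hA2uniq hA2extr hneg hfx hA1'
        intro y hy
        rw [uIcc_comm, uIcc_of_le hneg.le] at hy
        exact this y hy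
      · have := seg_s1 hd2.continuous hdiff hA2uniq hA2extr hpos hA1' hfx
        intro y hy
        rw [uIcc_of_le hpos.le] at hy
        exact this y hy
    · push_neg at hfx
      calc a / (1+b*x)^2 < 0 := div_neg_of_neg_of_pos haneg (by positivity)
        _ ≤ deriv f x := hfx
  -- derivative of r
  have hdr : ∀ x : ℝ, (1 + b * x) ≠ 0 → HasDerivAt r (a/(1+b*x)^2) x := by
    intro x hne
    have h1 : HasDerivAt (fun z : ℝ => 1 + b * z) b x := by
      simpa using ((hasDerivAt_id x).const_mul b).const_add 1
    have h2 : HasDerivAt (fun z : ℝ => a * z) a x := by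
      simpa using (hasDerivAt_id x).const_mul a
    have h3 := h2.div h1 hne
    have h3 : HasDerivAt r ((a * (1 + b * x) - a * x * b) / (1 + b * x) ^ 2) x := by rw [hrfun]; exact h3
    convert h3 using 1
    field_simp
    ring
  -- F = r - f
  set F : ℝ → ℝ := fun x => r x - f x with hFdef
  have hF0 : F 0 = 0 := by
    simp [hFdef, hr 0, hf0]
  have hFD : ∀ x : ℝ, (1 + b * x) ≠ 0 → HasDerivAt F (a/(1+b*x)^2 - deriv f x) x :=
    fun x hne => (hdr x hne).sub (hdiff x).hasDerivAt
  constructor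
  · -- left side
    intro x hx
    have hx0 : x < 0 := hx.2
    have hxl : -(1/b) < x := hx.1
    have hIocpos : ∀ y ∈ Ioc (-(1/b)) (0:ℝ), 0 < 1 + b * y := by
      intro y hy
      have h1 : b * (-(1/b)) = -1 := by field_simp
      nlinarith [hy.1, hbpos]
    have hanti : StrictAntiOn F (Ioc (-(1/b)) 0) := by
      apply strictAntiOn_of_deriv_neg (convex_Ioc _ _)
      · intro y hy
        exact ((hFD y (hIocpos y hy).ne').continuousAt).continuousWithinAt
      · intro y hy
        rw [interior_Ioc] at hy
        have hbne := (hIocpos y (Ioo_subset_Ioc_self hy)).ne'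
        rw [(hFD y hbne).deriv]
        have := hcomp y (ne_of_lt hy.2) (hIocpos y (Ioo_subset_Ioc_self hy))
        linarith
    have hmem1 : x ∈ Ioc (-(1/b)) (0:ℝ) := ⟨hxl, hx0.le⟩
    have hmem2 : (0:ℝ) ∈ Ioc (-(1/b)) (0:ℝ) := ⟨by
      have : (0:ℝ) < 1/b := by positivity
      linarith, le_refl 0⟩
    have := hanti hmem1 hmem2 hx0
    rw [hF0] at this
    simp only [hFdef] at this
    linarith
  · -- right side
    intro x hx
    have hIcipos : ∀ y ∈ Ici (0:ℝ), 0 < 1 + b * y := by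
      intro y hy
      have : 0 ≤ b * y := mul_nonneg hbpos.le hy
      linarith
    have hanti : StrictAntiOn F (Ici 0) := by
      apply strictAntiOn_of_deriv_neg (convex_Ici _)
      · intro y hy
        exact ((hFD y (hIcipos y hy).ne').continuousAt).continuousWithinAt
      · intro y hy
        rw [interior_Ici] at hy
        have hy0 : (0:ℝ) < y := hy
        have hbne := (hIcipos y hy0.le).ne'
        rw [(hFD y hbne).deriv]
        have := hcomp y hy0.ne' (hIcipos y hy0.le)
        linarith
    have := hanti (self_mem_Ici) (mem_Ici.mpr hx.le) hx
    rw [hF0] at this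
    simp only [hFdef] at this
    linarith
end

section
/- Let f : ℝ → ℝ be three times continuously differentiable, satisfying (A1) x·f(x) < 0 for x ≠ 0 and f'(0) < 0; (A2) f is bounded below with at most one critical point x*, a local extremum; (A3) (Sf)(x) < 0 for x ≠ x*; and f''(0) > 0. Set a = f'(0), b = −f''(0)/(2f'(0)), r(x) = ax/(1+bx), and define the functional F(t,φ) = f(φ(−1)) on ℝ × C([−1,0],ℝ). Then F satisfies the generalized Yorke condition: r(𝓜(φ)) ≤ F(t,φ) for all φ ∈ C([−1,0],ℝ), and F(t,φ) ≤ r(−𝓜(−φ)) for all φ ∈ C([−1,0],ℝ) with min_{s∈[−1,0]} φ(s) > −1/b. -/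
open Set Filter Topology

/-- The Yorke functional 𝓜(φ) = max{0, max_{s ∈ [-1,0]} φ(s)}. -/
noncomputable def yorkeM (φ : ℝ → ℝ) : ℝ := max 0 (sSup (φ '' Icc (-1 : ℝ) 0))

section YorkeAux

variable (f : ℝ → ℝ) (a b : ℝ)

lemma yorke_aux_hw (hd1 : Differentiable ℝ (deriv f)) (hd2 : Differentiable ℝ (deriv (deriv f))) :
    ∀ x : ℝ, deriv f x < 0 → HasDerivAt (fun y => (-(deriv f y)) ^ (-(1:ℝ)/2))
      (2⁻¹ * deriv (deriv f) x * (-(deriv f x)) ^ (-(3:ℝ)/2)) x := by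
  intro x hx
  have hp : HasDerivAt (fun y => -(deriv f y)) (-(deriv (deriv f) x)) x := (hd1 x).hasDerivAt.neg
  have h := hp.rpow_const (p := -(1:ℝ)/2) (Or.inl (by linarith : -(deriv f x) ≠ 0))
  convert h using 1
  rw [show ((-(1:ℝ)/2) - 1) = (-(3:ℝ)/2) by norm_num]
  ring


lemma yorke_aux_hw1 (hd1 : Differentiable ℝ (deriv f)) (hd2 : Differentiable ℝ (deriv (deriv f))) :
    ∀ x : ℝ, deriv f x < 0 → HasDerivAt
      (fun y => 2⁻¹ * deriv (deriv f) y * (-(deriv f y)) ^ (-(3:ℝ)/2))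
      (2⁻¹ * deriv (deriv (deriv f)) x * (-(deriv f x)) ^ (-(3:ℝ)/2)
        + 4⁻¹ * 3 * (deriv (deriv f) x)^2 * (-(deriv f x)) ^ (-(5:ℝ)/2)) x := by
  intro x hx
  have hppos : (0:ℝ) < -(deriv f x) := by linarith
  have hp : HasDerivAt (fun y => -(deriv f y)) (-(deriv (deriv f) x)) x := (hd1 x).hasDerivAt.neg
  have h32 : HasDerivAt (fun y => (-(deriv f y)) ^ (-(3:ℝ)/2))
      ((-(deriv (deriv f) x)) * (-(3:ℝ)/2) * (-(deriv f x)) ^ ((-(3:ℝ)/2) - 1)) x :=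
    hp.rpow_const (Or.inl (ne_of_gt hppos))
  have hd2x : HasDerivAt (fun y => 2⁻¹ * deriv (deriv f) y) (2⁻¹ * deriv (deriv (deriv f)) x) x :=
    (hd2 x).hasDerivAt.const_mul 2⁻¹
  have h := hd2x.mul h32
  refine h.congr_deriv ?_
  rw [show ((-(3:ℝ)/2) - 1) = (-(5:ℝ)/2) by norm_num]
  ring

lemma yorke_aux_hw2pos     (hid2 : iteratedDeriv 2 f = deriv (deriv f))
    (hid3 : iteratedDeriv 3 f = deriv (deriv (deriv f)))
    (hA3 : ∀ x : ℝ, deriv f x ≠ 0 → Schwarzian f x < 0) :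
    ∀ x : ℝ, deriv f x < 0 →
      0 < 2⁻¹ * deriv (deriv (deriv f)) x * (-(deriv f x)) ^ (-(3:ℝ)/2)
        + 4⁻¹ * 3 * (deriv (deriv f) x)^2 * (-(deriv f x)) ^ (-(5:ℝ)/2) := by
  intro x hx
  have hppos : (0:ℝ) < -(deriv f x) := by linarith
  have hS := hA3 x (ne_of_lt hx)
  rw [Schwarzian, hid2, hid3] at hS
  have hu2 : (0:ℝ) < (deriv f x)^2 := by nlinarith [pow_pos hppos 2]
  have heq : (deriv (deriv (deriv f)) x * deriv f x - 3/2 * (deriv (deriv f) x)^2) / (deriv f x)^2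
      = deriv (deriv (deriv f)) x / deriv f x - 3/2 * (deriv (deriv f) x / deriv f x)^2 := by
    have hne : deriv f x ≠ 0 := ne_of_lt hx
    field_simp
  rw [← heq] at hS
  have hnum := (div_lt_iff₀ hu2).mp hS
  have key : -(3/2) * (deriv (deriv f) x)^2 < deriv (deriv (deriv f)) x * (-(deriv f x)) := by
    nlinarith [hnum]
  have e35 : (-(deriv f x)) ^ (-(3:ℝ)/2) = (-(deriv f x)) * (-(deriv f x)) ^ (-(5:ℝ)/2) := by
    have h := Real.rpow_add hppos 1 (-(5:ℝ)/2)
    rw [show ((1:ℝ) + -(5:ℝ)/2) = (-(3:ℝ)/2) by norm_num] at h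
    rw [h, Real.rpow_one]
  rw [e35]
  have h5 : (0:ℝ) < (-(deriv f x)) ^ (-(5:ℝ)/2) := Real.rpow_pos_of_pos hppos _
  have hpos2 : 0 < 2⁻¹ * deriv (deriv (deriv f)) x * (-(deriv f x)) + 4⁻¹*3 * (deriv (deriv f) x)^2 := by
    nlinarith [key]
  nlinarith [mul_pos hpos2 h5]


lemma yorke_aux_tangent (ha : a = deriv f 0) (ha0 : a < 0)
    (hid2 : iteratedDeriv 2 f = deriv (deriv f))
    (hb : b = -(iteratedDeriv 2 f 0) / (2 * deriv f 0)) :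
    2⁻¹ * deriv (deriv f) 0 * (-a) ^ (-(3:ℝ)/2) = b * (-a) ^ (-(1:ℝ)/2) := by
  have hna : (0:ℝ) < -a := by linarith
  have e : (-a) ^ (-(3:ℝ)/2) = (-a)⁻¹ * (-a) ^ (-(1:ℝ)/2) := by
    rw [← Real.rpow_neg_one, ← Real.rpow_add hna]
    norm_num
  rw [hb, hid2, ← ha, e]
  have hane : a ≠ 0 := ne_of_lt ha0
  field_simp

lemma yorke_aux_lemD (ha : a = deriv f 0) (ha0 : a < 0)
    (hw : ∀ x : ℝ, deriv f x < 0 → HasDerivAt (fun y => (-(deriv f y)) ^ (-(1:ℝ)/2))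
      (2⁻¹ * deriv (deriv f) x * (-(deriv f x)) ^ (-(3:ℝ)/2)) x)
    (hw1 : ∀ x : ℝ, deriv f x < 0 → HasDerivAt
      (fun y => 2⁻¹ * deriv (deriv f) y * (-(deriv f y)) ^ (-(3:ℝ)/2))
      (2⁻¹ * deriv (deriv (deriv f)) x * (-(deriv f x)) ^ (-(3:ℝ)/2)
        + 4⁻¹ * 3 * (deriv (deriv f) x)^2 * (-(deriv f x)) ^ (-(5:ℝ)/2)) x)
    (hw2pos : ∀ x : ℝ, deriv f x < 0 →
      0 < 2⁻¹ * deriv (deriv (deriv f)) x * (-(deriv f x)) ^ (-(3:ℝ)/2)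
        + 4⁻¹ * 3 * (deriv (deriv f) x)^2 * (-(deriv f x)) ^ (-(5:ℝ)/2))
    (hW10 : 2⁻¹ * deriv (deriv f) 0 * (-a) ^ (-(3:ℝ)/2) = b * (-a) ^ (-(1:ℝ)/2)) :
    ∀ c : ℝ, (∀ y ∈ uIcc (0:ℝ) c, deriv f y < 0) → 0 < 1 + b*c →
      a / (1+b*c)^2 ≤ deriv f c := by
  intro c H hbc
  have hna : (0:ℝ) < -a := by linarith
  have haa : -(deriv f 0) = -a := by rw [ha]
  -- notation
  set w1 : ℝ → ℝ := fun y => 2⁻¹ * deriv (deriv f) y * (-(deriv f y)) ^ (-(3:ℝ)/2) with hw1def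
  set W : ℝ → ℝ := fun y => (-(deriv f y)) ^ (-(1:ℝ)/2) - (1+b*y) * (-a) ^ (-(1:ℝ)/2) with hWdef
  have hWd : ∀ x : ℝ, deriv f x < 0 → HasDerivAt W (w1 x - b * (-a) ^ (-(1:ℝ)/2)) x := by
    intro x hx
    have hl : HasDerivAt (fun y => (1+b*y) * (-a) ^ (-(1:ℝ)/2)) (b * (-a) ^ (-(1:ℝ)/2)) x := by
      have := (((hasDerivAt_id x).const_mul b).const_add 1).mul_const ((-a) ^ (-(1:ℝ)/2))
      simpa using this
    exact (hw x hx).sub hl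
  have hW0 : W 0 = 0 := by
    simp only [hWdef, haa]
    ring
  have hw10 : w1 0 = b * (-a) ^ (-(1:ℝ)/2) := by rw [hw1def]; simp only [haa]; exact hW10
  have hWc : 0 ≤ W c := by
    rcases le_or_gt 0 c with h0c | hc0
    · rw [uIcc_of_le h0c] at H
      have hmono1 : StrictMonoOn w1 (Icc 0 c) := by
        apply strictMonoOn_of_deriv_pos (convex_Icc 0 c)
        · exact fun y hy => (hw1 y (H y hy)).continuousAt.continuousWithinAt
        · intro x hx
          rw [interior_Icc] at hx
          rw [(hw1 x (H x (Ioo_subset_Icc_self hx))).deriv]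
          exact hw2pos x (H x (Ioo_subset_Icc_self hx))
      have hWmono : MonotoneOn W (Icc 0 c) := by
        apply monotoneOn_of_deriv_nonneg (convex_Icc 0 c)
        · exact fun y hy => (hWd y (H y hy)).continuousAt.continuousWithinAt
        · intro x hx
          rw [interior_Icc] at hx
          exact (hWd x (H x (Ioo_subset_Icc_self hx))).differentiableAt.differentiableWithinAt
        · intro x hx
          rw [interior_Icc] at hx
          rw [(hWd x (H x (Ioo_subset_Icc_self hx))).deriv]
          have h0m : (0:ℝ) ∈ Icc (0:ℝ) c := ⟨le_refl 0, h0c⟩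
          have hxm : x ∈ Icc (0:ℝ) c := Ioo_subset_Icc_self hx
          have := hmono1 h0m hxm hx.1
          rw [hw10] at this
          linarith
      have := hWmono ⟨le_refl 0, h0c⟩ ⟨h0c, le_refl c⟩ h0c
      linarith [hW0]
    · rw [uIcc_of_ge (le_of_lt hc0)] at H
      have hmono1 : StrictMonoOn w1 (Icc c 0) := by
        apply strictMonoOn_of_deriv_pos (convex_Icc c 0)
        · exact fun y hy => (hw1 y (H y hy)).continuousAt.continuousWithinAt
        · intro x hx
          rw [interior_Icc] at hx
          rw [(hw1 x (H x (Ioo_subset_Icc_self hx))).deriv]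
          exact hw2pos x (H x (Ioo_subset_Icc_self hx))
      have hWanti : AntitoneOn W (Icc c 0) := by
        apply antitoneOn_of_deriv_nonpos (convex_Icc c 0)
        · exact fun y hy => (hWd y (H y hy)).continuousAt.continuousWithinAt
        · intro x hx
          rw [interior_Icc] at hx
          exact (hWd x (H x (Ioo_subset_Icc_self hx))).differentiableAt.differentiableWithinAt
        · intro x hx
          rw [interior_Icc] at hx
          have h0m : (0:ℝ) ∈ Icc c (0:ℝ) := ⟨le_of_lt hc0, le_refl 0⟩
          have hxm : x ∈ Icc c (0:ℝ) := Ioo_subset_Icc_self hx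
          rw [(hWd x (H x hxm)).deriv]
          have := hmono1 hxm h0m hx.2
          rw [hw10] at this
          linarith
      have := hWanti ⟨le_refl c, le_of_lt hc0⟩ ⟨le_of_lt hc0, le_refl 0⟩ (le_of_lt hc0)
      linarith [hW0]
  -- algebra endgame
  have hpc : (0:ℝ) < -(deriv f c) := by
    have := H c right_mem_uIcc
    linarith
  have hWc' : (1 + b*c) * (-a) ^ (-(1:ℝ)/2) ≤ (-(deriv f c)) ^ (-(1:ℝ)/2) := by
    rw [hWdef] at hWc
    exact sub_nonneg.mp hWc
  have hL : (0:ℝ) < (1 + b*c) * (-a) ^ (-(1:ℝ)/2) := mul_pos hbc (Real.rpow_pos_of_pos hna _)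
  have hsq := mul_le_mul hWc' hWc' (le_of_lt hL) (le_of_lt (Real.rpow_pos_of_pos hpc _))
  have eP : (-(deriv f c)) ^ (-(1:ℝ)/2) * (-(deriv f c)) ^ (-(1:ℝ)/2) = (-(deriv f c))⁻¹ := by
    rw [← Real.rpow_add hpc, ← Real.rpow_neg_one]
    norm_num
  have eA : (-a) ^ (-(1:ℝ)/2) * (-a) ^ (-(1:ℝ)/2) = (-a)⁻¹ := by
    rw [← Real.rpow_add hna, ← Real.rpow_neg_one]
    norm_num
  have hsq' : (1+b*c)^2 * (-a)⁻¹ ≤ (-(deriv f c))⁻¹ := by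
    calc (1+b*c)^2 * (-a)⁻¹
        = ((1+b*c) * (-a) ^ (-(1:ℝ)/2)) * ((1+b*c) * (-a) ^ (-(1:ℝ)/2)) := by rw [mul_mul_mul_comm, eA]; ring
      _ ≤ _ := hsq
      _ = (-(deriv f c))⁻¹ := eP
  have h3 : (1+b*c)^2 * (-(deriv f c)) ≤ -a := by
    have hm := mul_le_mul_of_nonneg_left hsq' (le_of_lt (mul_pos hna hpc))
    have hane : (-a) ≠ 0 := ne_of_gt hna
    have hpne : (-(deriv f c)) ≠ 0 := ne_of_gt hpc
    have ha' : a ≠ 0 := ne_of_lt ha0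
    have hdc : deriv f c ≠ 0 := by intro h; rw [h] at hpc; linarith
    have e1 : (-a * -(deriv f c)) * ((1+b*c)^2 * (-a)⁻¹) = (1+b*c)^2 * (-(deriv f c)) := by
      field_simp
    have e2 : (-a * -(deriv f c)) * (-(deriv f c))⁻¹ = -a := by field_simp
    rw [e1, e2] at hm
    exact hm
  have h2 : (0:ℝ) < (1+b*c)^2 := by positivity
  rw [div_le_iff₀ h2]
  nlinarith [h3]

lemma yorke_aux_lemM (ha0 : a < 0) (hb0 : 0 < b)
    (hdf : Differentiable ℝ f) (hf0 : f 0 = 0)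
    (lemD : ∀ c : ℝ, (∀ y ∈ uIcc (0:ℝ) c, deriv f y < 0) → 0 < 1 + b*c →
      a / (1+b*c)^2 ≤ deriv f c) :
    (∀ c : ℝ, 0 < c → (∀ y ∈ Ico (0:ℝ) c, deriv f y < 0) → a*c/(1+b*c) ≤ f c) ∧
    (∀ c : ℝ, -(1/b) < c → c < 0 → (∀ y ∈ Ioc c (0:ℝ), deriv f y < 0) → f c ≤ a*c/(1+b*c)) := by
  have hRd : ∀ x : ℝ, 1 + b*x ≠ 0 → HasDerivAt (fun y => a*y/(1+b*y)) (a/(1+b*x)^2) x := by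
    intro x hne
    have h1 : HasDerivAt (fun y : ℝ => a*y) a x := by simpa using (hasDerivAt_id x).const_mul a
    have h2 : HasDerivAt (fun y : ℝ => 1+b*y) b x := by
      simpa using ((hasDerivAt_id x).const_mul b).const_add 1
    have h := h1.div h2 hne
    refine h.congr_deriv ?_
    field_simp
    ring
  constructor
  · intro c hc H
    have hne : ∀ x ∈ Icc (0:ℝ) c, 1 + b*x ≠ 0 := by
      intro x hx
      have : 0 ≤ b*x := mul_nonneg (le_of_lt hb0) hx.1
      nlinarith
    have hmono : MonotoneOn (fun x => f x - a*x/(1+b*x)) (Icc 0 c) := by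
      apply monotoneOn_of_deriv_nonneg (convex_Icc 0 c)
      · intro x hx
        exact ((hdf x).hasDerivAt.sub (hRd x (hne x hx))).continuousAt.continuousWithinAt
      · intro x hx
        rw [interior_Icc] at hx
        exact ((hdf x).hasDerivAt.sub (hRd x (hne x (Ioo_subset_Icc_self hx)))).differentiableAt.differentiableWithinAt
      · intro x hx
        rw [interior_Icc] at hx
        erw [((hdf x).hasDerivAt.sub (hRd x (hne x (Ioo_subset_Icc_self hx)))).deriv]
        have hbx : 0 < 1 + b*x := by nlinarith [mul_nonneg (le_of_lt hb0) (le_of_lt hx.1)]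
        have hD := lemD x (by
          intro y hy
          rw [uIcc_of_le (le_of_lt hx.1)] at hy
          exact H y ⟨hy.1, lt_of_le_of_lt hy.2 hx.2⟩) hbx
        linarith
    have h := hmono ⟨le_refl 0, le_of_lt hc⟩ ⟨le_of_lt hc, le_refl c⟩ (le_of_lt hc)
    simp only [hf0, mul_zero, zero_div, sub_zero, zero_sub] at h
    linarith [h]
  · intro c hcb hc0 H
    have hbc : 0 < 1 + b*c := by
      have h1 : b * -(1/b) < b * c := mul_lt_mul_of_pos_left hcb hb0
      rw [mul_neg, mul_one_div, div_self (ne_of_gt hb0)] at h1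
      linarith
    have hne : ∀ x ∈ Icc c (0:ℝ), 1 + b*x ≠ 0 := by
      intro x hx
      have : b*c ≤ b*x := mul_le_mul_of_nonneg_left hx.1 (le_of_lt hb0)
      nlinarith
    have hmono : MonotoneOn (fun x => f x - a*x/(1+b*x)) (Icc c 0) := by
      apply monotoneOn_of_deriv_nonneg (convex_Icc c 0)
      · intro x hx
        exact ((hdf x).hasDerivAt.sub (hRd x (hne x hx))).continuousAt.continuousWithinAt
      · intro x hx
        rw [interior_Icc] at hx
        exact ((hdf x).hasDerivAt.sub (hRd x (hne x (Ioo_subset_Icc_self hx)))).differentiableAt.differentiableWithinAt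
      · intro x hx
        rw [interior_Icc] at hx
        erw [((hdf x).hasDerivAt.sub (hRd x (hne x (Ioo_subset_Icc_self hx)))).deriv]
        have hbx : 0 < 1 + b*x := by
          have : b*c ≤ b*x := mul_le_mul_of_nonneg_left (le_of_lt hx.1) (le_of_lt hb0)
          nlinarith
        have hD := lemD x (by
          intro y hy
          rw [uIcc_of_ge (le_of_lt hx.2)] at hy
          exact H y ⟨lt_of_lt_of_le hx.1 hy.1, hy.2⟩) hbx
        linarith
    have h := hmono ⟨le_refl c, le_of_lt hc0⟩ ⟨le_of_lt hc0, le_refl 0⟩ (le_of_lt hc0)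
    simp only [hf0, mul_zero, zero_div, sub_zero, zero_sub] at h
    linarith [h]

lemma yorke_aux_noextr (hdf : Differentiable ℝ f) :
    ∀ z l u : ℝ, l < z → z < u → (∀ y ∈ Ioo l z, deriv f y < 0) →
      (∀ y ∈ Ioo z u, deriv f y < 0) → ¬ IsLocalExtr f z := by
  intro z l u hlz hzu hleft hright hext
  have hA1 : StrictAntiOn f (Icc l z) :=
    strictAntiOn_of_deriv_neg (convex_Icc l z) hdf.continuous.continuousOn
      (by rw [interior_Icc]; exact hleft)
  have hA2 : StrictAntiOn f (Icc z u) :=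
    strictAntiOn_of_deriv_neg (convex_Icc z u) hdf.continuous.continuousOn
      (by rw [interior_Icc]; exact hright)
  rcases hext with hmin | hmax
  · have h1 : ∀ᶠ y in 𝓝[>] z, f z ≤ f y := hmin.filter_mono nhdsWithin_le_nhds
    have h2 : Ioc z u ∈ 𝓝[>] z := Ioc_mem_nhdsGT_of_mem ⟨le_refl z, hzu⟩
    obtain ⟨y, hy1, hy2⟩ := (h1.and (eventually_of_mem h2 (fun y hy => hy))).exists
    have : f y < f z := hA2 ⟨le_refl z, le_of_lt hzu⟩ ⟨le_of_lt hy2.1, hy2.2⟩ hy2.1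
    linarith
  · have h1 : ∀ᶠ y in 𝓝[<] z, f y ≤ f z := hmax.filter_mono nhdsWithin_le_nhds
    have h2 : Ico l z ∈ 𝓝[<] z := Ico_mem_nhdsLT_of_mem ⟨hlz, le_refl z⟩
    obtain ⟨y, hy1, hy2⟩ := (h1.and (eventually_of_mem h2 (fun y hy => hy))).exists
    have : f z < f y := hA1 ⟨hy2.1, le_of_lt hy2.2⟩ ⟨le_of_lt hlz, le_refl z⟩ hy2.2
    linarith

lemma yorke_aux_P (ha0 : a < 0) (hb0 : 0 < b)
    (hdf : Differentiable ℝ f) (hc1 : Continuous (deriv f)) (hA1' : deriv f 0 < 0)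
    (hA2uniq : ∀ x y : ℝ, deriv f x = 0 → deriv f y = 0 → x = y)
    (hA2extr : ∀ x : ℝ, deriv f x = 0 → IsLocalExtr f x)
    (hnoextr : ∀ z l u : ℝ, l < z → z < u → (∀ y ∈ Ioo l z, deriv f y < 0) →
      (∀ y ∈ Ioo z u, deriv f y < 0) → ¬ IsLocalExtr f z)
    (lemMp : ∀ c : ℝ, 0 < c → (∀ y ∈ Ico (0:ℝ) c, deriv f y < 0) → a*c/(1+b*c) ≤ f c)
    (lemMm : ∀ c : ℝ, -(1/b) < c → c < 0 → (∀ y ∈ Ioc c (0:ℝ), deriv f y < 0) → f c ≤ a*c/(1+b*c)) :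
    (∀ c : ℝ, 0 < c → a*c/(1+b*c) ≤ f c) ∧
    (∀ c : ℝ, -(1/b) < c → c < 0 → f c ≤ a*c/(1+b*c)) := by
  constructor
  · intro c hc
    by_cases hall : ∀ y ∈ Ico (0:ℝ) c, deriv f y < 0
    · exact lemMp c hc hall
    · push_neg at hall
      obtain ⟨t, ht, ht0⟩ := hall
      obtain ⟨z, hzm, hz0⟩ := intermediate_value_Icc ht.1 hc1.continuousOn ⟨le_of_lt hA1', ht0⟩
      have hzpos : 0 < z := by
        rcases eq_or_lt_of_le hzm.1 with h | h
        · exfalso; rw [← h] at hz0; exact absurd hz0 (ne_of_lt hA1')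
        · exact h
      have hzc : z < c := lt_of_le_of_lt hzm.2 ht.2
      have hneg : ∀ y ∈ Ico (0:ℝ) z, deriv f y < 0 := by
        intro y hy
        rcases lt_trichotomy (deriv f y) 0 with h|h|h
        · exact h
        · exact absurd (hA2uniq y z h hz0) (ne_of_lt hy.2)
        · obtain ⟨z', hz', hz'0⟩ := intermediate_value_Icc hy.1 hc1.continuousOn
            ⟨le_of_lt hA1', le_of_lt h⟩
          have := hA2uniq z' z hz'0 hz0
          rw [this] at hz'
          linarith [hz'.2, hy.2]
      have hrz : a*z/(1+b*z) ≤ f z := lemMp z hzpos hneg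
      have hpos : ∀ y : ℝ, z < y → 0 < deriv f y := by
        intro y hzy
        rcases lt_trichotomy (deriv f y) 0 with h|h|h
        · exfalso
          have hr : ∀ s ∈ Ioo z y, deriv f s < 0 := by
            intro s hs
            rcases lt_trichotomy (deriv f s) 0 with h'|h'|h'
            · exact h'
            · exact absurd (hA2uniq s z h' hz0) (ne_of_gt hs.1)
            · obtain ⟨z', hz', hz'0⟩ := intermediate_value_Icc' (le_of_lt hs.2) hc1.continuousOn
                ⟨le_of_lt h, le_of_lt h'⟩
              have := hA2uniq z' z hz'0 hz0
              rw [this] at hz'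
              linarith [hz'.1, hs.1]
          exact hnoextr z 0 y hzpos hzy (fun s hs => hneg s ⟨le_of_lt hs.1, hs.2⟩) hr
            (hA2extr z hz0)
        · exact absurd (hA2uniq y z h hz0) (ne_of_gt hzy)
        · exact h
      have hm2 : MonotoneOn f (Icc z c) :=
        monotoneOn_of_deriv_nonneg (convex_Icc z c) hdf.continuous.continuousOn
          hdf.differentiableOn
          (fun x hx => by rw [interior_Icc] at hx; exact le_of_lt (hpos x hx.1))
      have hfzc : f z ≤ f c := hm2 ⟨le_refl z, le_of_lt hzc⟩ ⟨le_of_lt hzc, le_refl c⟩ (le_of_lt hzc)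
      have hrmono : a*c/(1+b*c) ≤ a*z/(1+b*z) := by
        have d1 : (0:ℝ) < 1+b*z := by nlinarith
        have d2 : (0:ℝ) < 1+b*c := by nlinarith
        rw [div_le_div_iff₀ d2 d1]
        nlinarith
      linarith
  · intro c hcb hc0
    by_cases hall : ∀ y ∈ Ioc c (0:ℝ), deriv f y < 0
    · exact lemMm c hcb hc0 hall
    · push_neg at hall
      obtain ⟨t, ht, ht0⟩ := hall
      obtain ⟨z, hzm, hz0⟩ := intermediate_value_Icc' ht.2 hc1.continuousOn ⟨le_of_lt hA1', ht0⟩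
      have hzneg : z < 0 := by
        rcases eq_or_lt_of_le hzm.2 with h | h
        · exfalso; rw [h] at hz0; exact absurd hz0 (ne_of_lt hA1')
        · exact h
      have hcz : c < z := lt_of_lt_of_le ht.1 hzm.1
      have hzb : -(1/b) < z := lt_trans hcb hcz
      have hneg : ∀ y ∈ Ioc z (0:ℝ), deriv f y < 0 := by
        intro y hy
        rcases lt_trichotomy (deriv f y) 0 with h|h|h
        · exact h
        · exact absurd (hA2uniq y z h hz0) (ne_of_gt hy.1)
        · obtain ⟨z', hz', hz'0⟩ := intermediate_value_Icc' hy.2 hc1.continuousOn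
            ⟨le_of_lt hA1', le_of_lt h⟩
          have := hA2uniq z' z hz'0 hz0
          rw [this] at hz'
          linarith [hz'.1, hy.1]
      have hfz : f z ≤ a*z/(1+b*z) := lemMm z hzb hzneg hneg
      have hpos : ∀ y : ℝ, y < z → 0 < deriv f y := by
        intro y hzy
        rcases lt_trichotomy (deriv f y) 0 with h|h|h
        · exfalso
          have hl : ∀ s ∈ Ioo y z, deriv f s < 0 := by
            intro s hs
            rcases lt_trichotomy (deriv f s) 0 with h'|h'|h'
            · exact h'
            · exact absurd (hA2uniq s z h' hz0) (ne_of_lt hs.2)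
            · obtain ⟨z', hz', hz'0⟩ := intermediate_value_Icc (le_of_lt hs.1) hc1.continuousOn
                ⟨le_of_lt h, le_of_lt h'⟩
              have := hA2uniq z' z hz'0 hz0
              rw [this] at hz'
              linarith [hz'.2, hs.2]
          exact hnoextr z y 0 hzy hzneg hl (fun s hs => hneg s ⟨hs.1, le_of_lt hs.2⟩)
            (hA2extr z hz0)
        · exact absurd (hA2uniq y z h hz0) (ne_of_lt hzy)
        · exact h
      have hm2 : MonotoneOn f (Icc c z) :=
        monotoneOn_of_deriv_nonneg (convex_Icc c z) hdf.continuous.continuousOn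
          hdf.differentiableOn
          (fun x hx => by rw [interior_Icc] at hx; exact le_of_lt (hpos x hx.2))
      have hfcz : f c ≤ f z := hm2 ⟨le_refl c, le_of_lt hcz⟩ ⟨le_of_lt hcz, le_refl z⟩ (le_of_lt hcz)
      have hrmono : a*z/(1+b*z) ≤ a*c/(1+b*c) := by
        have hbc : 0 < 1 + b*c := by
          have h1 : b * -(1/b) < b * c := mul_lt_mul_of_pos_left hcb hb0
          rw [mul_neg, mul_one_div, div_self (ne_of_gt hb0)] at h1
          linarith
        have d1 : (0:ℝ) < 1+b*z := by nlinarith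
        rw [div_le_div_iff₀ d1 hbc]
        nlinarith
      linarith

lemma yorke_aux_final (ha0 : a < 0) (hb0 : 0 < b)
    (hdf : Differentiable ℝ f)
    (hA1 : ∀ x : ℝ, x ≠ 0 → x * f x < 0)
    (P1 : ∀ c : ℝ, 0 < c → a*c/(1+b*c) ≤ f c)
    (P2 : ∀ c : ℝ, -(1/b) < c → c < 0 → f c ≤ a*c/(1+b*c))
    (r : ℝ → ℝ) (hr : ∀ x : ℝ, r x = a * x / (1 + b * x))
    (F : ℝ → (ℝ → ℝ) → ℝ) (hF : ∀ t : ℝ, ∀ φ : ℝ → ℝ, F t φ = f (φ (-1))) :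
    (∀ t : ℝ, ∀ φ : ℝ → ℝ, ContinuousOn φ (Icc (-1 : ℝ) 0) →
        r (yorkeM φ) ≤ F t φ) ∧
    (∀ t : ℝ, ∀ φ : ℝ → ℝ, ContinuousOn φ (Icc (-1 : ℝ) 0) →
        (∀ s ∈ Icc (-1 : ℝ) 0, -(1 / b) < φ s) →
        F t φ ≤ r (-(yorkeM fun s => -φ s))) := by
  have hf0 : f 0 = 0 := by
    have hcf : Continuous f := hdf.continuous
    have hle : f 0 ≤ 0 := by
      have ht : Tendsto f (𝓝[>] (0:ℝ)) (𝓝 (f 0)) := (hcf.tendsto 0).mono_left nhdsWithin_le_nhds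
      refine le_of_tendsto ht ?_
      filter_upwards [self_mem_nhdsWithin] with x hx
      have hx' : (0:ℝ) < x := hx
      have h := hA1 x (ne_of_gt hx')
      nlinarith
    have hge : 0 ≤ f 0 := by
      have ht : Tendsto f (𝓝[<] (0:ℝ)) (𝓝 (f 0)) := (hcf.tendsto 0).mono_left nhdsWithin_le_nhds
      refine ge_of_tendsto ht ?_
      filter_upwards [self_mem_nhdsWithin] with x hx
      have hx' : x < (0:ℝ) := hx
      have h := hA1 x (ne_of_lt hx')
      nlinarith
    linarith
  have hfneg : ∀ x : ℝ, 0 ≤ x → f x ≤ 0 := by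
    intro x hx
    rcases eq_or_lt_of_le hx with h | h
    · rw [← h, hf0]
    · have := hA1 x (ne_of_gt h); nlinarith
  have hfpos : ∀ x : ℝ, x ≤ 0 → 0 ≤ f x := by
    intro x hx
    rcases eq_or_lt_of_le hx with h | h
    · rw [h, hf0]
    · have := hA1 x (ne_of_lt h); nlinarith
  have hmem : (-1 : ℝ) ∈ Icc (-1:ℝ) 0 := ⟨le_refl _, by norm_num⟩
  constructor
  · intro t φ hφ
    rw [hF, hr]
    have hM0 : 0 ≤ yorkeM φ := le_max_left _ _
    rcases le_or_gt (φ (-1)) 0 with h1 | h1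
    · have hrle : a * yorkeM φ / (1 + b * yorkeM φ) ≤ 0 := by
        apply div_nonpos_of_nonpos_of_nonneg
        · exact mul_nonpos_of_nonpos_of_nonneg (le_of_lt ha0) hM0
        · nlinarith [mul_nonneg (le_of_lt hb0) hM0]
      exact le_trans hrle (hfpos _ h1)
    · have hsup : φ (-1) ≤ yorkeM φ := by
        refine le_trans ?_ (le_max_right _ _)
        exact le_csSup ((isCompact_Icc.image_of_continuousOn hφ).bddAbove) ⟨-1, hmem, rfl⟩
      have hmono : a * yorkeM φ / (1 + b * yorkeM φ) ≤ a * φ (-1) / (1 + b * φ (-1)) := by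
        have d1 : (0:ℝ) < 1 + b * φ (-1) := by nlinarith
        have d2 : (0:ℝ) < 1 + b * yorkeM φ := by nlinarith
        rw [div_le_div_iff₀ d2 d1]
        nlinarith
      exact le_trans hmono (P1 _ h1)
  · intro t φ hφ hlow
    rw [hF, hr]
    set M2 : ℝ := yorkeM fun s => -φ s with hM2def
    have hM20 : 0 ≤ M2 := le_max_left _ _
    have himg : ((fun s => -φ s) '' Icc (-1:ℝ) 0).Nonempty := ⟨-φ (-1), ⟨-1, hmem, rfl⟩⟩
    have hcomp : IsCompact ((fun s => -φ s) '' Icc (-1:ℝ) 0) :=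
      isCompact_Icc.image_of_continuousOn hφ.neg
    have hM2lt : M2 < 1/b := by
      have hsmem := hcomp.sSup_mem himg
      obtain ⟨z, hz, hz'⟩ := hsmem
      have := hlow z hz
      rw [hM2def, yorkeM]
      apply max_lt
      · positivity
      · rw [← hz']; linarith
    have hphim : -M2 ≤ φ (-1) := by
      have : -φ (-1) ≤ M2 := by
        refine le_trans ?_ (le_max_right _ _)
        exact le_csSup hcomp.bddAbove ⟨-1, hmem, rfl⟩
      linarith
    have hbM2 : 0 < 1 + b * -M2 := by
      have h1 : b * M2 < b * (1/b) := mul_lt_mul_of_pos_left hM2lt hb0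
      rw [mul_one_div, div_self (ne_of_gt hb0)] at h1
      nlinarith
    rcases le_or_gt 0 (φ (-1)) with h1 | h1
    · have hrge : 0 ≤ a * -M2 / (1 + b * -M2) := by
        apply div_nonneg _ (le_of_lt hbM2)
        nlinarith [mul_nonneg (neg_nonneg.mpr (le_of_lt ha0)) hM20]
      exact le_trans (hfneg _ h1) hrge
    · have hP2 := P2 (φ (-1)) (hlow (-1) hmem) h1
      have hmono : a * φ (-1) / (1 + b * φ (-1)) ≤ a * -M2 / (1 + b * -M2) := by
        have d1 : (0:ℝ) < 1 + b * φ (-1) := by nlinarith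
        rw [div_le_div_iff₀ d1 hbM2]
        nlinarith
      exact le_trans hP2 hmono

end YorkeAux

/-- Corollary: under (A1)-(A3) and f''(0) > 0, the functional F(t,φ) = f(φ(-1))
satisfies the generalized Yorke condition (GY) with a = f'(0),
b = -f''(0)/(2f'(0)), r(x) = ax/(1+bx). -/
theorem generalized_yorke_condition (f : ℝ → ℝ)
    (hf : ContDiff ℝ 3 f)
    (hA1 : ∀ x : ℝ, x ≠ 0 → x * f x < 0) (hA1' : deriv f 0 < 0)
    (hA2bdd : ∃ B : ℝ, ∀ x : ℝ, B ≤ f x)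
    (hA2uniq : ∀ x y : ℝ, deriv f x = 0 → deriv f y = 0 → x = y)
    (hA2extr : ∀ x : ℝ, deriv f x = 0 → IsLocalExtr f x)
    (hA3 : ∀ x : ℝ, deriv f x ≠ 0 → Schwarzian f x < 0)
    (hf2 : 0 < iteratedDeriv 2 f 0)
    (a b : ℝ) (ha : a = deriv f 0)
    (hb : b = -(iteratedDeriv 2 f 0) / (2 * deriv f 0))
    (r : ℝ → ℝ) (hr : ∀ x : ℝ, r x = a * x / (1 + b * x))
    (F : ℝ → (ℝ → ℝ) → ℝ) (hF : ∀ t : ℝ, ∀ φ : ℝ → ℝ, F t φ = f (φ (-1))) :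
    (∀ t : ℝ, ∀ φ : ℝ → ℝ, ContinuousOn φ (Icc (-1 : ℝ) 0) →
        r (yorkeM φ) ≤ F t φ) ∧
    (∀ t : ℝ, ∀ φ : ℝ → ℝ, ContinuousOn φ (Icc (-1 : ℝ) 0) →
        (∀ s ∈ Icc (-1 : ℝ) 0, -(1 / b) < φ s) →
        F t φ ≤ r (-(yorkeM fun s => -φ s))) := by
  -- smoothness bookkeeping
  rw [show ((3 : WithTop ℕ∞)) = 2 + 1 from by norm_num] at hf
  have h3 := contDiff_succ_iff_deriv.mp hf
  have hdf : Differentiable ℝ f := h3.1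
  have h2 : ContDiff ℝ 2 (deriv f) := h3.2.2
  rw [show ((2 : WithTop ℕ∞)) = 1 + 1 from by norm_num] at h2
  have h2' := contDiff_succ_iff_deriv.mp h2
  have hd1 : Differentiable ℝ (deriv f) := h2'.1
  have h1 : ContDiff ℝ 1 (deriv (deriv f)) := h2'.2.2
  have hd2 : Differentiable ℝ (deriv (deriv f)) := h1.differentiable (by norm_num)
  have hc1 : Continuous (deriv f) := hd1.continuous
  have hid2 : iteratedDeriv 2 f = deriv (deriv f) := by
    rw [show (2:ℕ) = 1 + 1 from rfl, iteratedDeriv_succ, iteratedDeriv_one]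
  have hid3 : iteratedDeriv 3 f = deriv (deriv (deriv f)) := by
    rw [show (3:ℕ) = 2 + 1 from rfl, iteratedDeriv_succ, hid2]
  -- basic sign facts
  have ha0 : a < 0 := by rw [ha]; exact hA1'
  have hb0 : 0 < b := by
    rw [hb]
    apply div_pos_of_neg_of_neg
    · linarith
    · linarith
  -- f 0 = 0
  have hf0 : f 0 = 0 := by
    have hcf : Continuous f := hdf.continuous
    have hle : f 0 ≤ 0 := by
      have ht : Tendsto f (𝓝[>] (0:ℝ)) (𝓝 (f 0)) := (hcf.tendsto 0).mono_left nhdsWithin_le_nhds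
      refine le_of_tendsto ht ?_
      filter_upwards [self_mem_nhdsWithin] with x hx
      have hx' : (0:ℝ) < x := hx
      have h := hA1 x (ne_of_gt hx')
      nlinarith
    have hge : 0 ≤ f 0 := by
      have ht : Tendsto f (𝓝[<] (0:ℝ)) (𝓝 (f 0)) := (hcf.tendsto 0).mono_left nhdsWithin_le_nhds
      refine ge_of_tendsto ht ?_
      filter_upwards [self_mem_nhdsWithin] with x hx
      have hx' : x < (0:ℝ) := hx
      have h := hA1 x (ne_of_lt hx')
      nlinarith
    linarith
  -- assemble
  have hw := yorke_aux_hw f hd1 hd2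
  have hw1 := yorke_aux_hw1 f hd1 hd2
  have hw2pos := yorke_aux_hw2pos f hid2 hid3 hA3
  have hW10 := yorke_aux_tangent f a b ha ha0 hid2 hb
  have lemD := yorke_aux_lemD f a b ha ha0 hw hw1 hw2pos hW10
  have lemM := yorke_aux_lemM f a b ha0 hb0 hdf hf0 lemD
  have hnoextr := yorke_aux_noextr f hdf
  have hP := yorke_aux_P f a b ha0 hb0 hdf hc1 hA1' hA2uniq hA2extr hnoextr lemM.1 lemM.2
  exact yorke_aux_final f a b ha0 hb0 hdf hA1 hP.1 hP.2 r hr F hF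
end

section
/- Assume f satisfies hypotheses (H1)–(H2) with b = 1 and a < 0 (so r(x) = ax/(1+x) and in particular f(t,φ) ≥ a for all t, φ). Let x(·,γ) be a solution of x'(t) = f(t,x_t) with initial value γ ∈ C([−1,0],ℝ) satisfying q ≤ γ(s) ≤ Q for all s ∈ [−1,0]. Then for all t ≥ 0 in the interval of existence: x(t,γ) ≥ min{q,0} + a, and x(t,γ) ≤ max{Q,0} + ϑ(κ), where κ = min{q,0} + a and ϑ is the bound function from (H1). -/
open Set Filter MeasureTheory Topology

/-- Membership in the phase space C = C([-1,0], ℝ): we work with functions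
ℝ → ℝ whose restriction to [-1,0] is continuous (only values on [-1,0] matter). -/
def InC (φ : ℝ → ℝ) : Prop := ContinuousOn φ (Icc (-1 : ℝ) 0)

/-- The segment x_t(s) = x(t+s), s ∈ [-1,0]. -/
def seg (x : ℝ → ℝ) (t : ℝ) : ℝ → ℝ := fun s => x (t + s)

/-- Carathéodory condition: measurable in t for fixed φ, continuous in φ
(w.r.t. uniform distance on [-1,0]) for fixed t, locally dominated by an
integrable function. -/
def Caratheodory (f : ℝ → (ℝ → ℝ) → ℝ) : Prop :=
  (∀ φ, InC φ → Measurable fun t => f t φ) ∧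
  (∀ t : ℝ, ∀ φ, InC φ → ∀ ε : ℝ, 0 < ε → ∃ δ : ℝ, 0 < δ ∧ ∀ ψ, InC ψ →
      (∀ s ∈ Icc (-1 : ℝ) 0, |ψ s - φ s| ≤ δ) → |f t ψ - f t φ| ≤ ε) ∧
  (∀ t : ℝ, ∀ φ, InC φ → ∃ δ : ℝ, 0 < δ ∧ ∃ m : ℝ → ℝ,
      IntegrableOn m (Icc (t - δ) (t + δ)) ∧
      ∀ s ∈ Icc (t - δ) (t + δ), ∀ ψ, InC ψ →
        (∀ u ∈ Icc (-1 : ℝ) 0, |ψ u - φ u| ≤ δ) → |f s ψ| ≤ m s)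

/-- (H1): f is Carathéodory and for every q there is ϑ(q) ≥ 0 dominating f(t,φ)
a.e. in t whenever φ ≥ q on [-1,0]. -/
def HypH1 (f : ℝ → (ℝ → ℝ) → ℝ) (θ : ℝ → ℝ) : Prop :=
  Caratheodory f ∧
  ∀ q : ℝ, 0 ≤ θ q ∧
    ∀ φ, InC φ → (∀ s ∈ Icc (-1 : ℝ) 0, q ≤ φ s) →
      ∀ᵐ t : ℝ ∂volume, f t φ ≤ θ q

/-- (H2), the generalized Yorke condition with r(x) = ax/(1+bx):
r(𝓜(φ)) ≤ f(t,φ) for all φ, and f(t,φ) ≤ r(-𝓜(-φ)) for all φ with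
min φ > -1/b (which is automatic when b = 0, since then b·φ(s) > -1 always). -/
def HypH2 (f : ℝ → (ℝ → ℝ) → ℝ) (a b : ℝ) : Prop :=
  (∀ t : ℝ, ∀ φ, InC φ → a * yorkeM φ / (1 + b * yorkeM φ) ≤ f t φ) ∧
  (∀ t : ℝ, ∀ φ, InC φ → (∀ s ∈ Icc (-1 : ℝ) 0, -1 < b * φ s) →
      f t φ ≤ a * (-yorkeM fun s => -φ s) / (1 + b * (-yorkeM fun s => -φ s)))

/-- (H3): ∫₀^∞ f(s, p_s) ds diverges for every continuous p having a nonzero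
limit at infinity. -/
def HypH3 (f : ℝ → (ℝ → ℝ) → ℝ) : Prop :=
  ∀ p : ℝ → ℝ, ContinuousOn p (Ici (-1 : ℝ)) → ∀ L : ℝ, L ≠ 0 →
    Tendsto p atTop (𝓝 L) →
    ¬∃ I : ℝ, Tendsto (fun T => ∫ s in (0 : ℝ)..T, f s (seg p s)) atTop (𝓝 I)

/-- A solution of x'(t) = f(t, x_t) on [α-1, ω) (with ω ∈ (α, +∞]) with initial
time α: continuous on [α-1, ω) and satisfying the equivalent integral equation
(absolute continuity plus a.e. differential equation) on [α, ω). -/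
def IsSolOn (f : ℝ → (ℝ → ℝ) → ℝ) (α : ℝ) (ω : EReal) (x : ℝ → ℝ) : Prop :=
  (α : EReal) < ω ∧
  ContinuousOn x {t : ℝ | α - 1 ≤ t ∧ (t : EReal) < ω} ∧
  ∀ t : ℝ, α ≤ t → (t : EReal) < ω →
    IntervalIntegrable (fun s => f s (seg x s)) volume α t ∧
    x t = x α + ∫ s in α..t, f s (seg x s)

/-- A solution on its maximal interval of existence [α-1, ω): it admits no
extension to any strictly larger interval [α-1, ω'). -/
def IsMaximalSolOn (f : ℝ → (ℝ → ℝ) → ℝ) (α : ℝ) (ω : EReal) (x : ℝ → ℝ) : Prop :=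
  IsSolOn f α ω x ∧
  ∀ ω' : EReal, ω < ω' → ∀ y : ℝ → ℝ, IsSolOn f α ω' y →
    ¬∀ t : ℝ, α - 1 ≤ t → (t : EReal) < ω → y t = x t

/-- A (global) solution of x'(t) = f(t, x_t) on [α-1, +∞). -/
def IsGlobalSol (f : ℝ → (ℝ → ℝ) → ℝ) (α : ℝ) (x : ℝ → ℝ) : Prop :=
  ContinuousOn x (Ici (α - 1)) ∧
  ∀ t : ℝ, α ≤ t →
    IntervalIntegrable (fun s => f s (seg x s)) volume α t ∧
    x t = x α + ∫ s in α..t, f s (seg x s)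

lemma yorkeM_nonneg' (φ : ℝ → ℝ) : 0 ≤ yorkeM φ := le_max_left _ _

lemma yorkeM_eq_zero' (φ : ℝ → ℝ) (h : ∀ s ∈ Icc (-1 : ℝ) 0, φ s ≤ 0) :
    yorkeM φ = 0 :=
  max_eq_left (Real.sSup_le (by rintro y ⟨s, hs, rfl⟩; exact h s hs) le_rfl)

lemma r_lower (a M : ℝ) (ha : a < 0) (hM : 0 ≤ M) : a ≤ a * M / (1 + M) := by
  have h1M : (0:ℝ) < 1 + M := by linarith
  rw [le_div_iff₀ h1M]
  nlinarith

lemma cont_le_of_right_lt {x : ℝ → ℝ} {c d m : ℝ} (hx : ContinuousOn x (Icc c d)) (hcd : c < d)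
    (h : ∀ τ ∈ Ioc c d, x τ < m) : x c ≤ m := by
  by_contra h'
  push_neg at h'
  have hc : ContinuousWithinAt x (Icc c d) c := hx c ⟨le_rfl, hcd.le⟩
  have h1 : x ⁻¹' Ioi m ∈ 𝓝[Icc c d] c := hc (Ioi_mem_nhds h')
  have h2 : x ⁻¹' Ioi m ∈ 𝓝[Ioc c d] c := nhdsWithin_mono c Ioc_subset_Icc_self h1
  haveI hne : (𝓝[Ioc c d] c).NeBot := by
    rw [← mem_closure_iff_nhdsWithin_neBot, closure_Ioc hcd.ne]
    exact ⟨le_rfl, hcd.le⟩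
  obtain ⟨τ, hτ1, hτ2⟩ := Filter.nonempty_of_mem (Filter.inter_mem h2 self_mem_nhdsWithin)
  exact absurd (h τ hτ2) (not_lt.2 (le_of_lt hτ1))

lemma cont_ge_of_right_gt {x : ℝ → ℝ} {c d m : ℝ} (hx : ContinuousOn x (Icc c d)) (hcd : c < d)
    (h : ∀ τ ∈ Ioc c d, m < x τ) : m ≤ x c := by
  by_contra h'
  push_neg at h'
  have hc : ContinuousWithinAt x (Icc c d) c := hx c ⟨le_rfl, hcd.le⟩
  have h1 : x ⁻¹' Iio m ∈ 𝓝[Icc c d] c := hc (Iio_mem_nhds h')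
  have h2 : x ⁻¹' Iio m ∈ 𝓝[Ioc c d] c := nhdsWithin_mono c Ioc_subset_Icc_self h1
  haveI hne : (𝓝[Ioc c d] c).NeBot := by
    rw [← mem_closure_iff_nhdsWithin_neBot, closure_Ioc hcd.ne]
    exact ⟨le_rfl, hcd.le⟩
  obtain ⟨τ, hτ1, hτ2⟩ := Filter.nonempty_of_mem (Filter.inter_mem h2 self_mem_nhdsWithin)
  exact absurd (h τ hτ2) (not_lt.2 (le_of_lt hτ1))

/-- A priori bounds: under (H1)-(H2) with b = 1, a solution with initial value
γ, q ≤ γ ≤ Q on [-1,0], satisfies min{q,0} + a ≤ x(t) ≤ max{Q,0} + ϑ(κ),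
κ = min{q,0} + a, for all t ≥ 0 in its interval of existence. -/
theorem a_priori_bounds
    (f : ℝ → (ℝ → ℝ) → ℝ) (θ : ℝ → ℝ) (a : ℝ) (ha : a < 0)
    (h1 : HypH1 f θ) (h2 : HypH2 f a 1)
    (γ : ℝ → ℝ) (hγ : InC γ) (q Q : ℝ)
    (hγbounds : ∀ s ∈ Icc (-1 : ℝ) 0, q ≤ γ s ∧ γ s ≤ Q)
    (ω : ℝ) (x : ℝ → ℝ)
    (hxc : ContinuousOn x (Ico (-1 : ℝ) ω))
    (hxinit : ∀ s ∈ Icc (-1 : ℝ) 0, x s = γ s)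
    (hxsol : ∀ t : ℝ, 0 ≤ t → t < ω →
      IntervalIntegrable (fun s => f s (seg x s)) volume 0 t ∧
      x t = x 0 + ∫ s in (0 : ℝ)..t, f s (seg x s)) :
    ∀ t : ℝ, 0 ≤ t → t < ω →
      min q 0 + a ≤ x t ∧ x t ≤ max Q 0 + θ (min q 0 + a) := by
  obtain ⟨⟨hmeas, hcont, hdom⟩, hH1⟩ := h1
  obtain ⟨h2l, h2u⟩ := h2
  set m := min q 0 with hm
  set κ := m + a with hκ
  have hm0 : m ≤ 0 := min_le_right q 0
  have hmq : m ≤ q := min_le_left q 0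
  have hγ0 := hγbounds 0 ⟨by norm_num, le_rfl⟩
  have hx0 : x 0 = γ 0 := hxinit 0 ⟨by norm_num, le_rfl⟩
  have hseg : ∀ s : ℝ, 0 ≤ s → s < ω → InC (seg x s) := by
    intro s hs hsω
    unfold InC seg
    refine hxc.comp ((continuous_const.add continuous_id).continuousOn) ?_
    intro v hv
    show s + v ∈ Ico (-1:ℝ) ω
    exact ⟨by linarith [hv.1], by linarith [hv.2]⟩
  have hflow : ∀ s : ℝ, 0 ≤ s → s < ω → a ≤ f s (seg x s) := by
    intro s hs hsω
    have h := h2l s (seg x s) (hseg s hs hsω)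
    rw [one_mul] at h
    exact le_trans (r_lower a _ ha (yorkeM_nonneg' _)) h
  have hii : ∀ t₁ t₂ : ℝ, 0 ≤ t₁ → t₁ ≤ t₂ → t₂ < ω →
      IntervalIntegrable (fun s => f s (seg x s)) volume t₁ t₂ := by
    intro t₁ t₂ h0 h12 h2ω
    refine ((hxsol t₂ (h0.trans h12) h2ω).1).mono_set ?_
    rw [uIcc_of_le h12, uIcc_of_le (h0.trans h12)]
    exact Icc_subset_Icc h0 le_rfl
  have hadd : ∀ t₁ t₂ : ℝ, 0 ≤ t₁ → t₁ ≤ t₂ → t₂ < ω →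
      x t₂ = x t₁ + ∫ s in t₁..t₂, f s (seg x s) := by
    intro t₁ t₂ h0 h12 h2ω
    have h1ω : t₁ < ω := lt_of_le_of_lt h12 h2ω
    have e2 := (hxsol t₂ (h0.trans h12) h2ω).2
    have e1 := (hxsol t₁ h0 h1ω).2
    have hsplit := intervalIntegral.integral_add_adjacent_intervals
      (hxsol t₁ h0 h1ω).1 (hii t₁ t₂ h0 h12 h2ω)
    rw [e2, e1, ← hsplit]; ring
  -- LOWER BOUND
  have hlow : ∀ t : ℝ, 0 ≤ t → t < ω → κ ≤ x t := by
    intro t₀ ht₀ ht₀ω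
    by_contra hcon
    push_neg at hcon
    have hxcont : ContinuousOn x (Icc 0 t₀) :=
      hxc.mono (fun s hs => ⟨by linarith [hs.1], lt_of_le_of_lt hs.2 ht₀ω⟩)
    set A := Icc 0 t₀ ∩ x ⁻¹' Ici m with hA
    have hAc : IsClosed A := hxcont.preimage_isClosed_of_isClosed isClosed_Icc isClosed_Ici
    have hAcomp : IsCompact A := isCompact_Icc.of_isClosed_subset hAc inter_subset_left
    have hA0 : (0:ℝ) ∈ A := by
      refine ⟨⟨le_rfl, ht₀⟩, ?_⟩
      simp only [mem_preimage, mem_Ici, hx0]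
      linarith [hγ0.1]
    set t₁ := sSup A with ht₁def
    have ht₁A : t₁ ∈ A := hAcomp.sSup_mem ⟨0, hA0⟩
    have ht₁mem : t₁ ∈ Icc 0 t₀ := ht₁A.1
    have hxt₁ : m ≤ x t₁ := ht₁A.2
    have hlt : ∀ τ ∈ Ioc t₁ t₀, x τ < m := by
      intro τ hτ
      by_contra hge
      push_neg at hge
      have hmem : τ ∈ A := ⟨⟨le_trans ht₁mem.1 hτ.1.le, hτ.2⟩, hge⟩
      exact absurd (le_csSup hAcomp.bddAbove hmem) (not_le.2 hτ.1)
    have ht₁lt : t₁ < t₀ := by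
      rcases lt_or_eq_of_le ht₁mem.2 with h | h
      · exact h
      · exfalso; rw [h] at hxt₁; linarith
    have hxt₁le : x t₁ ≤ m :=
      cont_le_of_right_lt (hxcont.mono (Icc_subset_Icc ht₁mem.1 le_rfl)) ht₁lt hlt
    have hstep : ∀ T : ℝ, t₁ ≤ T → T ≤ t₁ + 1 → T < ω → m + a ≤ x T := by
      intro T hT1 hT2 hTω
      have h0t₁ : 0 ≤ t₁ := ht₁mem.1
      have heq := hadd t₁ T h0t₁ hT1 hTω
      have hmono : ∫ _s in t₁..T, a ≤ ∫ s in t₁..T, f s (seg x s) :=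
        intervalIntegral.integral_mono_on hT1 intervalIntegrable_const
          (hii t₁ T h0t₁ hT1 hTω)
          (fun s hs => hflow s (le_trans h0t₁ hs.1) (lt_of_le_of_lt hs.2 hTω))
      rw [intervalIntegral.integral_const, smul_eq_mul] at hmono
      have hge : a ≤ (T - t₁) * a := by nlinarith
      linarith
    by_cases hcase : t₀ ≤ t₁ + 1
    · exact absurd (hstep t₀ ht₁lt.le hcase ht₀ω) (by linarith)
    · push_neg at hcase
      have h1ω : t₁ + 1 < ω := by linarith
      have hxnp : ∀ s ∈ Icc t₁ t₀, x s ≤ 0 := by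
        intro s hs
        rcases eq_or_lt_of_le hs.1 with h | h
        · rw [← h]; linarith
        · exact le_trans (hlt s ⟨h, hs.2⟩).le hm0
      have hf0 : ∀ s ∈ Icc (t₁ + 1) t₀, 0 ≤ f s (seg x s) := by
        intro s hs
        have hY : yorkeM (seg x s) = 0 := by
          apply yorkeM_eq_zero'
          intro v hv
          exact hxnp (s + v) ⟨by linarith [hv.1, hs.1], by linarith [hv.2, hs.2]⟩
        have h := h2l s (seg x s)
          (hseg s (by linarith [ht₁mem.1, hs.1]) (lt_of_le_of_lt hs.2 ht₀ω))
        rw [hY] at h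
        simpa using h
      have heq := hadd (t₁ + 1) t₀ (by linarith [ht₁mem.1]) hcase.le ht₀ω
      have hnn : 0 ≤ ∫ s in (t₁+1)..t₀, f s (seg x s) :=
        intervalIntegral.integral_nonneg hcase.le hf0
      have hst := hstep (t₁ + 1) (by linarith) le_rfl h1ω
      linarith
  -- UPPER BOUND
  intro t ht htω
  refine ⟨hlow t ht htω, ?_⟩
  have hθκ : 0 ≤ θ κ := (hH1 κ).1
  set MQ := max Q 0 with hMQ
  by_cases hxt : x t ≤ MQ
  · linarith
  push_neg at hxt
  have ht0 : 0 < t := by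
    rcases lt_or_eq_of_le ht with h | h
    · exact h
    · exfalso
      rw [← h] at hxt
      rw [hx0] at hxt
      have := le_max_left Q 0
      linarith [hγ0.2]
  -- a.e. bound on [0, t]
  have hAE : ∀ᵐ s ∂(volume.restrict (Icc (0:ℝ) t)), f s (seg x s) ≤ θ κ := by
    have hge : ∀ u ∈ Icc (-1 : ℝ) t, κ ≤ x u := by
      intro u hu
      rcases le_or_gt u 0 with h | h
      · rw [hxinit u ⟨hu.1, h⟩]
        linarith [(hγbounds u ⟨hu.1, h⟩).1]
      · exact hlow u h.le (lt_of_le_of_lt hu.2 htω)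
    have hsegge : ∀ u : ℝ, u ∈ Icc (0:ℝ) t → ∀ v ∈ Icc (-1:ℝ) 0, κ ≤ seg x u v := by
      intro u hu v hv
      exact hge (u + v) ⟨by linarith [hu.1, hv.1], by linarith [hu.2, hv.2]⟩
    have hQae : ∀ᵐ s : ℝ ∂volume, ∀ u : ℚ, (u:ℝ) ∈ Icc (0:ℝ) t → f s (seg x (u:ℝ)) ≤ θ κ := by
      rw [ae_all_iff]
      intro u
      by_cases hu : (u:ℝ) ∈ Icc (0:ℝ) t
      · have hb := (hH1 κ).2 (seg x (u:ℝ)) (hseg (u:ℝ) hu.1 (lt_of_le_of_lt hu.2 htω))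
          (hsegge (u:ℝ) hu)
        filter_upwards [hb] with s hs _
        exact hs
      · filter_upwards with s hu'
        exact absurd hu' hu
    have hUC := (isCompact_Icc (a := (-1:ℝ)) (b := t)).uniformContinuousOn_of_continuous
      (hxc.mono (fun s hs => ⟨hs.1, lt_of_le_of_lt hs.2 htω⟩))
    rw [Metric.uniformContinuousOn_iff] at hUC
    filter_upwards [ae_restrict_of_ae hQae, ae_restrict_mem measurableSet_Icc] with s hQ hs
    refine le_of_forall_pos_le_add ?_
    intro ε hε
    obtain ⟨δ, hδ, hfc⟩ := hcont s (seg x s) (hseg s hs.1 (lt_of_le_of_lt hs.2 htω)) ε hε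
    obtain ⟨δ', hδ', hx'⟩ := hUC δ hδ
    obtain ⟨u, hu, hud⟩ : ∃ u : ℚ, (u:ℝ) ∈ Icc (0:ℝ) t ∧ |(u:ℝ) - s| < δ' := by
      rcases lt_or_eq_of_le hs.2 with hst | hst
      · obtain ⟨u, hu1, hu2⟩ := exists_rat_btwn (lt_min hst (lt_add_of_pos_right s hδ'))
        refine ⟨u, ⟨le_trans hs.1 hu1.le, (lt_min_iff.1 hu2).1.le⟩, ?_⟩
        rw [abs_sub_lt_iff]
        exact ⟨by linarith [(lt_min_iff.1 hu2).2], by linarith⟩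
      · obtain ⟨u, hu1, hu2⟩ := exists_rat_btwn (show max 0 (s - δ') < s from
          max_lt (by rw [hst]; exact ht0) (by linarith))
        refine ⟨u, ⟨le_trans (le_max_left 0 (s - δ')) hu1.le, by rw [← hst]; exact hu2.le⟩, ?_⟩
        rw [abs_sub_lt_iff]
        exact ⟨by linarith, by linarith [le_max_right 0 (s - δ')]⟩
    have hclose : ∀ v ∈ Icc (-1:ℝ) 0, |seg x (u:ℝ) v - seg x s v| ≤ δ := by
      intro v hv
      have huv : (u:ℝ) + v ∈ Icc (-1:ℝ) t := ⟨by linarith [hu.1, hv.1], by linarith [hu.2, hv.2]⟩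
      have hsv : s + v ∈ Icc (-1:ℝ) t := ⟨by linarith [hs.1, hv.1], by linarith [hs.2, hv.2]⟩
      have hd : dist ((u:ℝ) + v) (s + v) < δ' := by
        rw [Real.dist_eq, show (u:ℝ) + v - (s + v) = (u:ℝ) - s by ring]
        exact hud
      have hdd := hx' _ huv _ hsv hd
      rw [Real.dist_eq] at hdd
      exact hdd.le
    have hfclose := hfc (seg x (u:ℝ)) (hseg (u:ℝ) hu.1 (lt_of_le_of_lt hu.2 htω)) hclose
    have hbu := hQ u hu
    have h1 := (abs_le.1 hfclose).1
    linarith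
  -- maximal point argument
  have hxcont : ContinuousOn x (Icc 0 t) :=
    hxc.mono (fun s hs => ⟨by linarith [hs.1], lt_of_le_of_lt hs.2 htω⟩)
  set B := Icc 0 t ∩ x ⁻¹' Iic MQ with hB
  have hBc : IsClosed B := hxcont.preimage_isClosed_of_isClosed isClosed_Icc isClosed_Iic
  have hBcomp : IsCompact B := isCompact_Icc.of_isClosed_subset hBc inter_subset_left
  have hB0 : (0:ℝ) ∈ B := by
    refine ⟨⟨le_rfl, ht⟩, ?_⟩
    simp only [mem_preimage, mem_Iic, hx0]
    exact le_trans hγ0.2 (le_max_left Q 0)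
  set t₁ := sSup B with ht₁def
  have ht₁B : t₁ ∈ B := hBcomp.sSup_mem ⟨0, hB0⟩
  have ht₁mem : t₁ ∈ Icc 0 t := ht₁B.1
  have hxt₁ : x t₁ ≤ MQ := ht₁B.2
  have hgt : ∀ τ ∈ Ioc t₁ t, MQ < x τ := by
    intro τ hτ
    by_contra hle
    push_neg at hle
    have hmem : τ ∈ B := ⟨⟨le_trans ht₁mem.1 hτ.1.le, hτ.2⟩, hle⟩
    exact absurd (le_csSup hBcomp.bddAbove hmem) (not_le.2 hτ.1)
  have ht₁lt : t₁ < t := by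
    rcases lt_or_eq_of_le ht₁mem.2 with h | h
    · exact h
    · exfalso; rw [h] at hxt₁; linarith
  have hxt₁ge : MQ ≤ x t₁ :=
    cont_ge_of_right_gt (hxcont.mono (Icc_subset_Icc ht₁mem.1 le_rfl)) ht₁lt hgt
  have hstep : ∀ T : ℝ, t₁ ≤ T → T ≤ t₁ + 1 → T ≤ t → x T ≤ MQ + θ κ := by
    intro T hT1 hT2 hTt
    have hTω : T < ω := lt_of_le_of_lt hTt htω
    have heq := hadd t₁ T ht₁mem.1 hT1 hTω
    have hle : (fun s => f s (seg x s)) ≤ᵐ[volume.restrict (Icc t₁ T)] fun _ => θ κ :=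
      ae_restrict_of_ae_restrict_of_subset (Icc_subset_Icc ht₁mem.1 hTt) hAE
    have hmono : ∫ s in t₁..T, f s (seg x s) ≤ ∫ _s in t₁..T, θ κ :=
      intervalIntegral.integral_mono_ae_restrict hT1 (hii t₁ T ht₁mem.1 hT1 hTω)
        intervalIntegrable_const hle
    rw [intervalIntegral.integral_const, smul_eq_mul] at hmono
    have hle1 : (T - t₁) * θ κ ≤ θ κ := by nlinarith
    linarith
  by_cases hcase : t ≤ t₁ + 1
  · exact hstep t ht₁lt.le hcase le_rfl
  · push_neg at hcase
    have hxnn : ∀ s ∈ Icc t₁ t, 0 ≤ x s := by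
      intro s hs
      rcases eq_or_lt_of_le hs.1 with h | h
      · rw [← h]; exact le_trans (le_max_right Q 0) hxt₁ge
      · exact le_trans (le_max_right Q 0) (hgt s ⟨h, hs.2⟩).le
    have hf0 : ∀ s ∈ Icc (t₁ + 1) t, f s (seg x s) ≤ 0 := by
      intro s hs
      have hs0 : (0:ℝ) ≤ s := by linarith [ht₁mem.1, hs.1]
      have hsω : s < ω := lt_of_le_of_lt hs.2 htω
      have hsegnn : ∀ v ∈ Icc (-1:ℝ) 0, 0 ≤ seg x s v := fun v hv =>
        hxnn (s + v) ⟨by linarith [hv.1, hs.1], by linarith [hv.2, hs.2]⟩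
      have hY : yorkeM (fun v => - seg x s v) = 0 :=
        yorkeM_eq_zero' _ (fun v hv => neg_nonpos.2 (hsegnn v hv))
      have h := h2u s (seg x s) (hseg s hs0 hsω)
        (fun v hv => by rw [one_mul]; linarith [hsegnn v hv])
      rw [hY] at h
      simpa using h
    have heq := hadd (t₁ + 1) t (by linarith [ht₁mem.1]) hcase.le htω
    have hnp : ∫ s in (t₁+1)..t, f s (seg x s) ≤ (0:ℝ) := by
      have hmono : ∫ s in (t₁+1)..t, f s (seg x s) ≤ ∫ _s in (t₁+1)..t, (0:ℝ) :=
        intervalIntegral.integral_mono_on hcase.le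
          (hii (t₁+1) t (by linarith [ht₁mem.1]) hcase.le htω)
          intervalIntegrable_const hf0
      simpa using hmono
    have hst := hstep (t₁ + 1) (by linarith) le_rfl (by linarith)
    linarith
end

section
/- Let a < −1, r(x) = ax/(1+x), and define A(x) = x + r(x) + (1/r(x))∫_x^0 r(t)dt for x ∈ (−1,∞)\{0\}, A(0) = 0; R(x) = (A'(0))² x / (A'(0) − (A''(0)/2)x), where A'(0) = a + 1/2 and A''(0) = −(2a + 1/3); ν = 2A'(0)/A''(0); and let x₂ > 0 be the point with r(x₂) = −x₂ (i.e. x₂ = −1−a). Then (A(x) − R(x))·x > 0 for all x ∈ (ν, x₂) with x ≠ 0. -/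
/-!
Since `∫ₓ⁰ r = a (log (1 + x) - x)`, clearing denominators gives
`(A x - R x) x = (1 + x) φ(x)` with `φ(x) = log (1 + x) - x P(x) / (D(x) (1 + x)²)`, where `D` is
the denominator of `R`. Then `φ(0) = 0` and `φ'(x) = x³ (1 + x) Q(x) / (D(x) (1 + x)²)²` with `Q`
linear in `x`. On `(ν, ∞)` we have `1 + x > 0`, `D(x) < 0`, and `Q(x) > Q(ν) = -(a + 1/2)/9 > 0`,
so `φ` decreases to `0` and then increases: it is positive away from `0`.
-/

open Set

theorem pos_of_map_zero_of_mul_deriv_pos {f f' : ℝ → ℝ} {s : Set ℝ} (hs : s.OrdConnected)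
    (h0 : (0 : ℝ) ∈ s) (hf0 : f 0 = 0) (hf : ∀ y ∈ s, HasDerivAt f (f' y) y)
    (hf' : ∀ y ∈ s, y ≠ 0 → 0 < y * f' y) {x : ℝ} (hx : x ∈ s) (hx0 : x ≠ 0) : 0 < f x := by
  have hcont : ∀ t ⊆ s, ContinuousOn f t := fun t ht y hy =>
    (hf y (ht hy)).continuousAt.continuousWithinAt
  have hderiv : ∀ t ⊆ s, ∀ y ∈ interior t, HasDerivWithinAt f (f' y) (interior t) y :=
    fun t ht y hy => (hf y (ht (interior_subset hy))).hasDerivWithinAt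
  rcases hx0.lt_or_gt with hneg | hpos
  · have hsub : Icc x 0 ⊆ s := hs.out hx h0
    have hanti : StrictAntiOn f (Icc x 0) :=
      strictAntiOn_of_hasDerivWithinAt_neg (convex_Icc x 0) (hcont _ hsub) (hderiv _ hsub)
        fun y hy => by
          rw [interior_Icc] at hy
          exact neg_of_mul_pos_right (hf' y (hsub (Ioo_subset_Icc_self hy)) hy.2.ne) hy.2.le
    simpa [hf0] using hanti (left_mem_Icc.2 hneg.le) (right_mem_Icc.2 hneg.le) hneg
  · have hsub : Icc 0 x ⊆ s := hs.out h0 hx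
    have hmono : StrictMonoOn f (Icc 0 x) :=
      strictMonoOn_of_hasDerivWithinAt_pos (convex_Icc 0 x) (hcont _ hsub) (hderiv _ hsub)
        fun y hy => by
          rw [interior_Icc] at hy
          exact pos_of_mul_pos_right (hf' y (hsub (Ioo_subset_Icc_self hy)) hy.1.ne') hy.1.le
    simpa [hf0] using hmono (left_mem_Icc.2 hpos.le) (right_mem_Icc.2 hpos.le) hpos

theorem integral_mul_div_one_add (a : ℝ) {x : ℝ} (hx : -1 < x) :
    ∫ t in x..(0 : ℝ), a * t / (1 + t) = a * (Real.log (1 + x) - x) := by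
  have hpos : ∀ t ∈ uIcc x (0 : ℝ), 0 < 1 + t := by
    intro t ht
    rcases mem_uIcc.mp ht with ⟨h1, -⟩ | ⟨h1, -⟩ <;> linarith
  have hderiv : ∀ t ∈ uIcc x (0 : ℝ),
      HasDerivAt (fun s => a * (s - Real.log (1 + s))) (a * t / (1 + t)) t := by
    intro t ht
    have hlog : HasDerivAt (fun s => Real.log (1 + s)) (1 / (1 + t)) t := by
      simpa using ((hasDerivAt_id t).const_add 1).log (hpos t ht).ne'
    refine (((hasDerivAt_id t).sub hlog).const_mul a).congr_deriv ?_
    field_simp [(hpos t ht).ne']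
    ring
  have hint : IntervalIntegrable (fun t => a * t / (1 + t)) MeasureTheory.volume x 0 :=
    ((continuousOn_const.mul continuousOn_id).div (continuousOn_const.add continuousOn_id)
      fun t ht => (hpos t ht).ne').intervalIntegrable
  rw [intervalIntegral.integral_eq_sub_of_hasDerivAt hderiv hint]
  simp only [add_zero, Real.log_one, sub_zero, mul_zero, zero_sub]
  ring

/-- `A'(0) - (A''(0) / 2) x`, the denominator of `R`. -/
noncomputable def denR (a x : ℝ) : ℝ := (a + 1 / 2) + (a + 1 / 6) * x

noncomputable def nuAR (a : ℝ) : ℝ := 2 * (a + 1 / 2) / -(2 * a + 1 / 3)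

noncomputable def gapAR (a x : ℝ) : ℝ :=
  Real.log (1 + x) -
    x * ((a + 1 / 2) + (5 / 2 * a + 11 / 12) * x + (11 / 6 * a + 5 / 12) * x ^ 2) /
      (denR a x * (1 + x) ^ 2)

theorem gapAR_zero (a : ℝ) : gapAR a 0 = 0 := by
  simp [gapAR]

theorem hasDerivAt_gapAR (a : ℝ) {x : ℝ} (hx : 1 + x ≠ 0) (hD : denR a x ≠ 0) :
    HasDerivAt (gapAR a)
      (x ^ 3 * (1 + x) * ((a + 1 / 18) * (a + 1 / 2) + (a + 1 / 6) ^ 2 * x) /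
        (denR a x * (1 + x) ^ 2) ^ 2) x := by
  have hlog : HasDerivAt (fun z => Real.log (1 + z)) (1 / (1 + x)) x := by
    simpa using ((hasDerivAt_id x).const_add 1).log hx
  have hnum := (hasDerivAt_id x).mul
    ((((hasDerivAt_id x).const_mul (5 / 2 * a + 11 / 12)).const_add (a + 1 / 2)).add
      ((hasDerivAt_pow 2 x).const_mul (11 / 6 * a + 5 / 12)))
  have hden := (((hasDerivAt_id x).const_mul (a + 1 / 6)).const_add (a + 1 / 2)).mul
    (((hasDerivAt_id x).const_add 1).pow 2)
  have hdenR : denR a x * (1 + x) ^ 2 ≠ 0 := mul_ne_zero hD (pow_ne_zero 2 hx)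
  refine (hlog.sub (hnum.div hden hdenR)).congr_deriv ?_
  simp only [Pi.mul_apply, Pi.add_apply, Pi.pow_apply, id_eq, denR] at hdenR ⊢
  rw [div_sub_div _ _ hx (pow_ne_zero 2 hdenR),
    div_eq_div_iff (mul_ne_zero hx (pow_ne_zero 2 hdenR)) (pow_ne_zero 2 hdenR)]
  push_cast
  ring

theorem signs_of_nuAR_lt {a x : ℝ} (ha : a < -1 / 2) (hx : nuAR a < x) :
    0 < 1 + x ∧ denR a x < 0 ∧ 0 < (a + 1 / 18) * (a + 1 / 2) + (a + 1 / 6) ^ 2 * x := by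
  have hx' : 2 * (a + 1 / 2) < x * -(2 * a + 1 / 3) := by
    rwa [nuAR, div_lt_iff₀ (by linarith)] at hx
  have hD : denR a x < 0 := by unfold denR; linarith
  refine ⟨by nlinarith, hD, ?_⟩
  -- `Q` is increasing and `Q(ν) = -(a + 1/2)/9`
  have := mul_lt_mul_of_neg_left hD (show a + 1 / 6 < 0 by linarith)
  unfold denR at this
  nlinarith

theorem gapAR_pos {a x : ℝ} (ha : a < -1 / 2)
    (hx : nuAR a < x) (hx0 : x ≠ 0) : 0 < gapAR a x := by
  have h0 : (0 : ℝ) ∈ Ioi (nuAR a) :=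
    mem_Ioi.2 <| div_neg_of_neg_of_pos (by linarith) (by linarith)
  refine pos_of_map_zero_of_mul_deriv_pos ordConnected_Ioi h0 (gapAR_zero a)
    (fun y hy => hasDerivAt_gapAR a (signs_of_nuAR_lt ha hy).1.ne'
      (signs_of_nuAR_lt ha hy).2.1.ne) (fun y hy hy0 => ?_) hx hx0
  obtain ⟨h1, hD, hQ⟩ := signs_of_nuAR_lt ha hy
  have hD₀ : denR a y ≠ 0 := hD.ne
  rw [← mul_div_assoc, show y * (y ^ 3 * (1 + y) * ((a + 1 / 18) * (a + 1 / 2) + (a + 1 / 6) ^ 2 * y))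
    = y ^ 4 * (1 + y) * ((a + 1 / 18) * (a + 1 / 2) + (a + 1 / 6) ^ 2 * y) by ring]
  positivity

theorem A_sub_R_mul_self_eq {a x : ℝ} (ha : a ≠ 0) (hx : 1 + x ≠ 0) (hx0 : x ≠ 0)
    (hD : denR a x ≠ 0) :
    (x + a * x / (1 + x) + 1 / (a * x / (1 + x)) * (a * (Real.log (1 + x) - x)) -
        (a + 1 / 2) ^ 2 * x / ((a + 1 / 2) - (-(2 * a + 1 / 3) / 2) * x)) * x =
      (1 + x) * gapAR a x := by
  have hR : (a + 1 / 2) - (-(2 * a + 1 / 3) / 2) * x = denR a x := by unfold denR; ring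
  rw [hR]
  unfold gapAR
  field_simp
  unfold denR
  ring

theorem A_comparison_with_R_general (a : ℝ) (ha : a < -1)
    (r A R : ℝ → ℝ) (c₁ c₂ ν x₂ : ℝ)
    (hr : ∀ x : ℝ, r x = a * x / (1 + x))
    (hA : ∀ x : ℝ, x ≠ 0 → A x = x + r x + (1 / r x) * ∫ t in x..(0 : ℝ), r t)
    (hc₁ : c₁ = a + 1 / 2) (hc₂ : c₂ = -(2 * a + 1 / 3))
    (hR : ∀ x : ℝ, R x = c₁ ^ 2 * x / (c₁ - (c₂ / 2) * x))
    (hν : ν = 2 * c₁ / c₂) :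
    ∀ x : ℝ, ν < x → x < x₂ → x ≠ 0 → 0 < (A x - R x) * x := by
  subst hc₁ hc₂ hν
  intro x hx _ hx0
  obtain ⟨hx1, hD, -⟩ := signs_of_nuAR_lt (by linarith) hx
  rw [hA x hx0, hR x]
  simp only [hr]
  rw [integral_mul_div_one_add a (by linarith), A_sub_R_mul_self_eq (by linarith) hx1.ne' hx0 hD.ne]
  exact mul_pos hx1 (gapAR_pos (by linarith) hx hx0)

/-- Lemma 2.4 of [lprtt]: for a < -1, with r(x) = ax/(1+x),
A(x) = x + r(x) + (1/r(x))∫ₓ⁰ r(t)dt, R(x) = (A'(0))²x/(A'(0) - (A''(0)/2)x)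
where A'(0) = a + 1/2 and A''(0) = -(2a + 1/3), ν = 2A'(0)/A''(0), and
x₂ = -1 - a (the point where r(x₂) = -x₂), one has (A(x) - R(x))·x > 0 on
(ν, x₂) \ {0}. -/
theorem A_comparison_with_R (a : ℝ) (ha : a < -1)
    (r A R : ℝ → ℝ) (c₁ c₂ ν x₂ : ℝ)
    (hr : ∀ x : ℝ, r x = a * x / (1 + x))
    (hA : ∀ x : ℝ, x ≠ 0 → A x = x + r x + (1 / r x) * ∫ t in x..(0 : ℝ), r t)
    (hA0 : A 0 = 0)
    (hc₁ : c₁ = a + 1 / 2) (hc₂ : c₂ = -(2 * a + 1 / 3))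
    (hR : ∀ x : ℝ, R x = c₁ ^ 2 * x / (c₁ - (c₂ / 2) * x))
    (hν : ν = 2 * c₁ / c₂) (hx₂ : x₂ = -1 - a) :
    ∀ x : ℝ, ν < x → x < x₂ → x ≠ 0 → 0 < (A x - R x) * x :=
  A_comparison_with_R_general a ha r A R c₁ c₂ ν x₂ hr hA hc₁ hc₂ hR hν
end

section
/- Assume f satisfies hypotheses (H1)–(H3) with b = 1, and let x be a solution of x'(t) = f(t,x_t) with m = liminf_{t→∞} x(t) < 0 < M = limsup_{t→∞} x(t), where r(x) = ax/(1+x). Then: (i) if a ∈ [−3/2, 0), then m > −1 and r(−r(M)/2) > −1; (ii) if a ∈ [−3/2, −5/4], then m > ν, where ν = 2A'(0)/A''(0) with A'(0) = a + 1/2 and A''(0) = −(2a + 1/3). -/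
open Set Filter MeasureTheory Topology

/-! The lower Yorke bound `f(t, φ) ≥ r(𝓜 φ)` drives everything. Let `M' > limsup x`, so that
eventually `x ≤ M'`, and put `K = -r(M') ∈ [0, -a]`. If `z` is the last zero of `x` before a
negative value, then `x' ≥ -K` gives `x(τ) ≤ K (z - τ)` on `[z - 1, z]`. Hence on `[z, z + 1]` every
segment `x_s` is below `K w` with `w = 1 + z - s`, and `r(K w) ≥ a K w - a K² w² / (1 + K)`;
integrating, `x ≥ aK/2 - aK²/(3(1 + K)) ≥ -a²(3 - a)/(6(1 - a))` up to time `z + 1`, and afterwards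
`x` cannot decrease while it stays negative. So `liminf x ≥ -a²(3 - a)/(6(1 - a))`, and this
constant exceeds `-1` for `a ≥ -3/2` and `ν` for `a ∈ [-3/2, -5/4]`. -/

lemma exists_last_zero {x : ℝ → ℝ} {a b : ℝ} (hab : a ≤ b) (hx : ContinuousOn x (Icc a b))
    (ha : 0 ≤ x a) (hb : x b < 0) : ∃ z ∈ Ico a b, x z = 0 ∧ ∀ u ∈ Ioc z b, x u < 0 := by
  have hS : IsCompact (Icc a b ∩ x ⁻¹' Ici 0) :=
    isCompact_Icc.of_isClosed_subset
      (hx.preimage_isClosed_of_isClosed isClosed_Icc isClosed_Ici) inter_subset_left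
  obtain ⟨z, ⟨hzI, hz0⟩, hzmax⟩ := hS.exists_isGreatest ⟨a, ⟨left_mem_Icc.2 hab, ha⟩⟩
  have hneg : ∀ u ∈ Ioc z b, x u < 0 := fun u hu =>
    not_le.1 fun h => (hu.1.trans_le (hzmax ⟨⟨hzI.1.trans hu.1.le, hu.2⟩, h⟩)).false
  obtain ⟨c, hc, hxc⟩ := intermediate_value_Icc' hzI.2 (hx.mono (Icc_subset_Icc hzI.1 le_rfl))
    ⟨hb.le, hz0⟩
  have hcz : c = z := le_antisymm (hzmax ⟨⟨hzI.1.trans hc.1, hc.2⟩, hxc.ge⟩) hc.1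
  subst hcz
  exact ⟨c, ⟨hzI.1, lt_of_le_of_ne hzI.2 fun h => by rw [h] at hxc; linarith⟩, hxc, hneg⟩

lemma integral_mul_sub_mul_sq_comp_sub (c q z t : ℝ) :
    ∫ s in z..t, (c * (1 + z - s) - q * (1 + z - s) ^ 2)
      = c * (1 - (1 + z - t) ^ 2) / 2 - q * (1 - (1 + z - t) ^ 3) / 3 := by
  rw [intervalIntegral.integral_comp_sub_left (fun w : ℝ => c * w - q * w ^ 2) (1 + z),
    intervalIntegral.integral_sub (f := fun w => c * w) (g := fun w => q * w ^ 2)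
      (by apply Continuous.intervalIntegrable; fun_prop)
      (by apply Continuous.intervalIntegrable; fun_prop),
    intervalIntegral.integral_const_mul, intervalIntegral.integral_const_mul, integral_id,
    integral_pow]
  ring

lemma rate_le_rate_of_le {a y c : ℝ} (ha : a ≤ 0) (hy : 0 ≤ y) (hyc : y ≤ c) :
    a * c / (1 + c) ≤ a * y / (1 + y) := by
  rw [div_le_div_iff₀ (by linarith) (by linarith)]
  nlinarith

lemma neg_rate_nonneg {a M : ℝ} (ha : a ≤ 0) (hM : 0 ≤ M) : 0 ≤ -(a * M / (1 + M)) :=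
  neg_nonneg.2 (div_nonpos_of_nonpos_of_nonneg (mul_nonpos_of_nonpos_of_nonneg ha hM)
    (by linarith))

lemma quadratic_le_rate {a y K : ℝ} (ha : a ≤ 0) (hy : 0 ≤ y) (hyK : y ≤ K) :
    a * y - a * y ^ 2 / (1 + K) ≤ a * y / (1 + y) := by
  have hK : 0 < 1 + K := by linarith
  have e : a * y - a * y ^ 2 / (1 + K) = (a * y * (1 + K) - a * y ^ 2) / (1 + K) := by
    field_simp
  rw [e, div_le_div_iff₀ (by linarith) (by linarith)]
  nlinarith [mul_nonneg (mul_nonneg (neg_nonneg.2 ha) (sq_nonneg y)) (sub_nonneg.2 hyK)]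

lemma neg_one_lt_rate_neg_half_rate {a M : ℝ} (ha : a < 0) (ha' : -(3 / 2) ≤ a) (hM : 0 < M) :
    -1 < a * (-(a * M / (1 + M)) / 2) / (1 + -(a * M / (1 + M)) / 2) := by
  have hM1 : 0 < 1 + M := by linarith
  set u := M / (1 + M)
  have hu0 : 0 < u := div_pos hM hM1
  have hu1 : u < 1 := (div_lt_one hM1).2 (by linarith)
  have hy : -(a * M / (1 + M)) / 2 = -a * u / 2 := by ring
  have hd : 0 < 1 + -a * u / 2 := by nlinarith
  rw [hy, neg_lt, ← neg_div, div_lt_one hd]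
  nlinarith [mul_nonneg (mul_pos hu0 (by linarith : (0 : ℝ) < 1 - u)).le
    (mul_nonneg (by linarith : (0 : ℝ) ≤ a + 3 / 2) (by linarith : (0 : ℝ) ≤ -a)),
    mul_nonneg hu0.le (mul_nonneg (by linarith : (0 : ℝ) ≤ a + 3 / 2)
      (by linarith : (0 : ℝ) ≤ 1 / 2 - a))]

-- `∫₀¹ (a K w - a K² w² / (1 + K)) dw`, the lower bound for `x` one time unit after a zero.
noncomputable def crossingBound (a K : ℝ) : ℝ := a * K / 2 - a * K ^ 2 / (3 * (1 + K))

lemma crossingBound_eq_div {a K : ℝ} (hK : 0 ≤ K) :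
    crossingBound a K = a * K * (3 + K) / (6 * (1 + K)) := by
  unfold crossingBound; field_simp; ring

lemma crossingBound_nonpos {a K : ℝ} (ha : a ≤ 0) (hK : 0 ≤ K) : crossingBound a K ≤ 0 := by
  rw [crossingBound_eq_div hK]
  exact div_nonpos_of_nonpos_of_nonneg
    (mul_nonpos_of_nonpos_of_nonneg (mul_nonpos_of_nonpos_of_nonneg ha hK) (by linarith))
    (by linarith)

lemma crossingBound_neg_self_le {a K : ℝ} (ha : a ≤ 0) (hK : 0 ≤ K) (hKa : K ≤ -a) :
    crossingBound a (-a) ≤ crossingBound a K := by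
  rw [crossingBound_eq_div (by linarith), crossingBound_eq_div hK,
    div_le_div_iff₀ (by linarith) (by linarith)]
  have hin : 0 ≤ 3 - a + K - a * K := by nlinarith [mul_nonneg (neg_nonneg.2 ha) hK]
  nlinarith [mul_nonneg (mul_nonneg (neg_nonneg.2 ha) (sub_nonneg.2 hKa)) hin]

lemma crossingBound_le_integral {a K w : ℝ} (ha : a ≤ 0) (hK : 0 ≤ K) (hw : w ≤ 1) :
    crossingBound a K ≤ a * K * (1 - w ^ 2) / 2 - a * K ^ 2 / (1 + K) * (1 - w ^ 3) / 3 := by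
  have hdiff : a * K * (1 - w ^ 2) / 2 - a * K ^ 2 / (1 + K) * (1 - w ^ 3) / 3 - crossingBound a K
      = -(a * K) * w ^ 2 * (3 * (1 + K) - 2 * K * w) / (6 * (1 + K)) := by
    unfold crossingBound; field_simp; ring
  have hnum : 0 ≤ -(a * K) * w ^ 2 * (3 * (1 + K) - 2 * K * w) :=
    mul_nonneg (mul_nonneg (by nlinarith) (sq_nonneg w)) (by nlinarith)
  linarith [div_nonneg hnum (by linarith : (0 : ℝ) ≤ 6 * (1 + K))]

lemma crossingBound_neg_self {a : ℝ} (ha : a < 1) :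
    crossingBound a (-a) = -a ^ 2 * (3 - a) / (6 * (1 - a)) := by
  have h₁ : 1 + -a ≠ 0 := by linarith
  have h₂ : 1 - a ≠ 0 := by linarith
  unfold crossingBound; field_simp; ring

lemma neg_one_lt_crossingBound_neg_self {a : ℝ} (ha : a < 0) (ha' : -(3 / 2) ≤ a) :
    -1 < crossingBound a (-a) := by
  rw [crossingBound_neg_self (by linarith), lt_div_iff₀ (by linarith)]
  nlinarith [mul_nonneg (mul_nonneg (neg_nonneg.2 ha.le)
    (by linarith : (0 : ℝ) ≤ 3 / 2 + a)) (by linarith : (0 : ℝ) ≤ 9 / 2 - a)]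

lemma nu_lt_crossingBound_neg_self {a : ℝ} (ha : -(3 / 2) ≤ a) (ha' : a ≤ -(5 / 4)) :
    2 * (a + 1 / 2) / -(2 * a + 1 / 3) < crossingBound a (-a) := by
  have hQ : 0 ≤ -2 * a ^ 3 + 26 / 3 * a ^ 2 - 6 := by
    nlinarith [sq_nonneg (a + 5 / 4), mul_nonneg (by linarith : (0 : ℝ) ≤ -5 / 4 - a) (sq_nonneg a),
      mul_nonneg (by linarith : (0 : ℝ) ≤ -5 / 4 - a) (by linarith : (0 : ℝ) ≤ -a)]
  rw [crossingBound_neg_self (by linarith), div_lt_div_iff₀ (by linarith) (by linarith)]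
  nlinarith [mul_nonneg (by linarith : (0 : ℝ) ≤ a + 3 / 2) hQ]

lemma inC_seg {x : ℝ → ℝ} {α s : ℝ} (hx : ContinuousOn x (Ici (α - 1))) (hs : α ≤ s) :
    InC (seg x s) :=
  hx.comp (continuous_const.add continuous_id).continuousOn fun u hu => by
    simp only [mem_Ici]; linarith [hu.1]

namespace IsGlobalSol

variable {f : ℝ → (ℝ → ℝ) → ℝ} {a α : ℝ} {x : ℝ → ℝ}

lemma rate_le (h2 : HypH2 f a 1) (ha : a ≤ 0) (hx : IsGlobalSol f α x) {s c : ℝ}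
    (hs : α ≤ s) (hc : 0 ≤ c) (hle : ∀ u ∈ Icc (s - 1) s, x u ≤ c) :
    a * c / (1 + c) ≤ f s (seg x s) := by
  have hM : yorkeM (seg x s) ≤ c :=
    max_le hc <| Real.sSup_le (fun _ ⟨v, hv, hxv⟩ => hxv ▸ hle (s + v) ⟨by linarith [hv.1], by
      linarith [hv.2]⟩) hc
  have := h2.1 s _ (inC_seg hx.1 hs)
  rw [one_mul] at this
  exact (rate_le_rate_of_le ha (le_max_left _ _) hM).trans this

lemma add_integral_le (hx : IsGlobalSol f α x) {g : ℝ → ℝ} {s t : ℝ} (hs : α ≤ s) (hst : s ≤ t)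
    (hg : IntervalIntegrable g volume s t) (hgf : ∀ u ∈ Icc s t, g u ≤ f u (seg x u)) :
    x s + ∫ u in s..t, g u ≤ x t := by
  obtain ⟨hIt, hxt⟩ := hx.2 t (hs.trans hst)
  obtain ⟨hIs, hxs⟩ := hx.2 s hs
  have hI : IntervalIntegrable (fun u => f u (seg x u)) volume s t :=
    hIt.mono_set (by rw [uIcc_of_le hst, uIcc_of_le (hs.trans hst)]; exact Icc_subset_Icc hs le_rfl)
  have := intervalIntegral.integral_interval_sub_left hIt hIs
  linarith [intervalIntegral.integral_mono_on hst hg hI hgf]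

lemma add_rate_mul_le (h2 : HypH2 f a 1) (ha : a ≤ 0) (hx : IsGlobalSol f α x) {s t M : ℝ}
    (hs : α ≤ s) (hst : s ≤ t) (hM : 0 ≤ M) (hle : ∀ u ∈ Icc (s - 1) t, x u ≤ M) :
    x s + a * M / (1 + M) * (t - s) ≤ x t := by
  have := hx.add_integral_le hs hst intervalIntegrable_const fun u hu =>
    hx.rate_le h2 ha (hs.trans hu.1) hM fun v hv =>
      hle v ⟨by linarith [hv.1, hu.1], hv.2.trans hu.2⟩
  rwa [intervalIntegral.integral_const, smul_eq_mul, mul_comm] at this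

lemma le_of_nonpos (h2 : HypH2 f a 1) (ha : a ≤ 0) (hx : IsGlobalSol f α x) {s t : ℝ}
    (hs : α ≤ s) (hst : s ≤ t) (hle : ∀ u ∈ Icc (s - 1) t, x u ≤ 0) : x s ≤ x t := by
  simpa using hx.add_rate_mul_le h2 ha hs hst le_rfl hle

lemma crossingBound_le_of_zero (h2 : HypH2 f a 1) (ha : a ≤ 0) (hx : IsGlobalSol f α x)
    {K z t : ℝ} (hK : 0 ≤ K) (hz : α ≤ z) (hzt : z ≤ t) (htz : t ≤ z + 1) (hxz : x z = 0)
    (hback : ∀ u ∈ Icc (z - 1) z, x u ≤ K * (z - u)) (hnonpos : ∀ u ∈ Icc z t, x u ≤ 0) :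
    crossingBound a K ≤ x t := by
  set q := a * K ^ 2 / (1 + K)
  have hrate : ∀ s ∈ Icc z t, a * K * (1 + z - s) - q * (1 + z - s) ^ 2 ≤ f s (seg x s) := by
    intro s hs
    have hy : 0 ≤ K * (1 + z - s) := mul_nonneg hK (by linarith [hs.2])
    calc a * K * (1 + z - s) - q * (1 + z - s) ^ 2
        = a * (K * (1 + z - s)) - a * (K * (1 + z - s)) ^ 2 / (1 + K) := by ring
      _ ≤ a * (K * (1 + z - s)) / (1 + K * (1 + z - s)) :=
          quadratic_le_rate ha hy (by nlinarith [hs.1])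
      _ ≤ f s (seg x s) := hx.rate_le h2 ha (hz.trans hs.1) hy fun u hu => by
          rcases le_total u z with huz | hzu
          · nlinarith [hback u ⟨by linarith [hu.1, hs.1], huz⟩, hu.1]
          · exact (hnonpos u ⟨hzu, hu.2.trans hs.2⟩).trans hy
  have hint := hx.add_integral_le hz hzt
    ((Continuous.intervalIntegrable (by fun_prop)) _ _) hrate
  rw [hxz, zero_add, integral_mul_sub_mul_sq_comp_sub] at hint
  exact (crossingBound_le_integral ha hK (by linarith)).trans hint

lemma crossingBound_le_of_sign_change (h2 : HypH2 f a 1) (ha : a ≤ 0) (hx : IsGlobalSol f α x)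
    {M T t₁ t₂ : ℝ} (hM : 0 ≤ M) (hT : α ≤ T) (hbd : ∀ t, T ≤ t → x t ≤ M)
    (ht₁ : T + 2 ≤ t₁) (ht₁₂ : t₁ ≤ t₂) (hx₁ : 0 ≤ x t₁) (hx₂ : x t₂ < 0) :
    crossingBound a (-(a * M / (1 + M))) ≤ x t₂ := by
  obtain ⟨z, hz, hxz, hneg⟩ := exists_last_zero ht₁₂
    (hx.1.mono fun u hu => by simp only [mem_Ici]; linarith [hu.1]) hx₁ hx₂
  have hK := neg_rate_nonneg ha hM
  have hback : ∀ u ∈ Icc (z - 1) z, x u ≤ -(a * M / (1 + M)) * (z - u) := fun u hu => by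
    have := hx.add_rate_mul_le h2 ha (by linarith [hu.1, hz.1]) hu.2 hM fun v hv =>
      hbd v (by linarith [hv.1, hu.1, hz.1])
    linarith
  have hnonpos : ∀ u ∈ Icc z t₂, x u ≤ 0 := fun u hu =>
    hu.1.eq_or_lt.elim (fun h => (h ▸ hxz).le) fun h => (hneg u ⟨h, hu.2⟩).le
  have hαz : α ≤ z := by linarith [hz.1]
  rcases le_total t₂ (z + 1) with h | h
  · exact hx.crossingBound_le_of_zero h2 ha hK hαz hz.2.le h hxz hback hnonpos
  · calc crossingBound a (-(a * M / (1 + M)))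
        ≤ x (z + 1) := hx.crossingBound_le_of_zero h2 ha hK hαz (by linarith) le_rfl hxz hback
          fun u hu => hnonpos u ⟨hu.1, hu.2.trans h⟩
      _ ≤ x t₂ := hx.le_of_nonpos h2 ha (by linarith) h fun u hu =>
          hnonpos u ⟨by linarith [hu.1], hu.2⟩

lemma crossingBound_neg_self_le_liminf (h2 : HypH2 f a 1) (ha : a ≤ 0) (hx : IsGlobalSol f α x)
    (hbdd₁ : IsBoundedUnder (· ≤ ·) atTop x) (hbdd₂ : IsBoundedUnder (· ≥ ·) atTop x)
    (hpos : 0 < limsup x atTop) :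
    crossingBound a (-a) ≤ liminf x atTop := by
  set M := limsup x atTop + 1
  have hM : 0 ≤ M := by linarith
  obtain ⟨T, hT⟩ := eventually_atTop.1 (eventually_lt_of_limsup_lt (lt_add_one _) hbdd₁)
  have hbd : ∀ t, max T α ≤ t → x t ≤ M := fun t ht => (hT t (le_of_max_le_left ht)).le
  obtain ⟨t₁, hx₁, ht₁⟩ := ((frequently_lt_of_lt_limsup hbdd₂.isCoboundedUnder_le hpos
    ).and_eventually (eventually_ge_atTop (max T α + 2))).exists
  have hK : -(a * M / (1 + M)) ≤ -a := by
    rw [neg_le_neg_iff, le_div_iff₀ (by linarith)]; linarith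
  refine le_liminf_of_le hbdd₁.isCoboundedUnder_ge ?_
  filter_upwards [eventually_ge_atTop t₁] with t ht
  rcases lt_or_ge (x t) 0 with hneg | hnn
  · calc crossingBound a (-a) ≤ crossingBound a (-(a * M / (1 + M))) :=
          crossingBound_neg_self_le ha (neg_rate_nonneg ha hM) hK
      _ ≤ x t :=
          hx.crossingBound_le_of_sign_change h2 ha hM (le_max_right _ _) hbd ht₁ ht hx₁.le hneg
  · exact (crossingBound_nonpos ha (neg_nonneg.2 ha)).trans hnn

end IsGlobalSol

theorem liminf_range_bounds_general
    (f : ℝ → (ℝ → ℝ) → ℝ) (a : ℝ) (ha : a < 0)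
    (h2 : HypH2 f a 1)
    (r : ℝ → ℝ) (hr : ∀ x : ℝ, r x = a * x / (1 + x))
    (c₁ c₂ ν : ℝ) (hc₁ : c₁ = a + 1 / 2) (hc₂ : c₂ = -(2 * a + 1 / 3))
    (hν : ν = 2 * c₁ / c₂)
    (α : ℝ) (x : ℝ → ℝ) (hx : IsGlobalSol f α x)
    (hxbdd₁ : IsBoundedUnder (· ≤ ·) atTop x)
    (hxbdd₂ : IsBoundedUnder (· ≥ ·) atTop x)
    (m M : ℝ) (hm : m = liminf x atTop) (hM : M = limsup x atTop)
    (hM0 : 0 < M) :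
    (-(3 / 2) ≤ a → -1 < m ∧ -1 < r (-(r M) / 2)) ∧
    (-(3 / 2) ≤ a ∧ a ≤ -(5 / 4) → ν < m) := by
  have hβm : crossingBound a (-a) ≤ m :=
    hm ▸ hx.crossingBound_neg_self_le_liminf h2 ha.le hxbdd₁ hxbdd₂ (hM ▸ hM0)
  refine ⟨fun ha' => ⟨(neg_one_lt_crossingBound_neg_self ha ha').trans_le hβm, ?_⟩,
    fun ⟨ha₁, ha₂⟩ => ?_⟩
  · rw [hr, hr]
    exact neg_one_lt_rate_neg_half_rate ha ha' hM0
  · rw [hν, hc₁, hc₂]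
    exact (nu_lt_crossingBound_neg_self ha₁ ha₂).trans_le hβm

/-- Corollary 2.6: under (H1)-(H3) with b = 1 and a solution with
m = liminf x < 0 < M = limsup x: (i) if a ∈ [-3/2, 0) then m > -1 and
r(-r(M)/2) > -1; (ii) if a ∈ [-3/2, -5/4] then m > ν = 2A'(0)/A''(0). -/
theorem liminf_range_bounds
    (f : ℝ → (ℝ → ℝ) → ℝ) (θ : ℝ → ℝ) (a : ℝ) (ha : a < 0)
    (h1 : HypH1 f θ) (h2 : HypH2 f a 1) (h3 : HypH3 f)
    (r : ℝ → ℝ) (hr : ∀ x : ℝ, r x = a * x / (1 + x))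
    (c₁ c₂ ν : ℝ) (hc₁ : c₁ = a + 1 / 2) (hc₂ : c₂ = -(2 * a + 1 / 3))
    (hν : ν = 2 * c₁ / c₂)
    (α : ℝ) (x : ℝ → ℝ) (hx : IsGlobalSol f α x)
    (hxbdd₁ : IsBoundedUnder (· ≤ ·) atTop x)
    (hxbdd₂ : IsBoundedUnder (· ≥ ·) atTop x)
    (m M : ℝ) (hm : m = liminf x atTop) (hM : M = limsup x atTop)
    (hm0 : m < 0) (hM0 : 0 < M) :
    (-(3 / 2) ≤ a → -1 < m ∧ -1 < r (-(r M) / 2)) ∧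
    (-(3 / 2) ≤ a ∧ a ≤ -(5 / 4) → ν < m) :=
  liminf_range_bounds_general f a ha h2 r hr c₁ c₂ ν hc₁ hc₂ hν α x hx hxbdd₁ hxbdd₂ m M hm hM hM0
end
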